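/- arXiv:1804.01067 — 8 statements merged into one kernel-verified Lean document; each statement's English description precedes it below -/
import Mathlib

section
/- Let c ∈ ℝ and x ∈ ℝ with x > c, let μ, ν ∈ ℂ satisfy Re μ < 0 and Re ν < 0, and let f : ℝ → ℂ be continuous on [c, x]. Then D_{c+}^ν(D_{c+}^μ f)(x) = D_{c+}^{μ+ν} f(x); explicitly, (1/Γ(−ν)) ∫_c^x (x−y)^{−ν−1} · ((1/Γ(−μ)) ∫_c^y (y−z)^{−μ−1} f(z) dz) dy = (1/Γ(−μ−ν)) ∫_c^x (x−z)^{−μ−ν−1} f(z) dz. -/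
/-!
With `α = -μ`, `β = -ν`: exchanging the order of integration over the triangle `c < z < y < x`
(Fubini applies since `‖f‖ ≤ M` there and `(x - y) ^ (Re β - 1) * (y - z) ^ (Re α - 1)` is
integrable on it) turns the left side into an integral of `f z` against
`∫_z^x (y - z) ^ (α - 1) (x - y) ^ (β - 1) dy = B(α, β) (x - z) ^ (α + β - 1)`, and
`B(α, β) = Γ(α) Γ(β) / Γ(α + β)` absorbs the constants `1 / Γ(α)`, `1 / Γ(β)` into `1 / Γ(α + β)`.
-/

open MeasureTheory intervalIntegral Complex
open Set

theorem intervalIntegrable_sub_rpow {q : ℝ} (hq : -1 < q) (a b : ℝ) :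
    IntervalIntegrable (fun z => (b - z) ^ q) volume a b := by
  simpa using (intervalIntegrable_rpow' (a := b - a) (b := b - b) hq).comp_sub_left b

namespace intervalIntegral

theorem integral_sub_rpow {q : ℝ} (hq : -1 < q) (a b : ℝ) :
    ∫ z in a..b, (b - z) ^ q = (b - a) ^ (q + 1) / (q + 1) := by
  rw [integral_comp_sub_left (fun t => t ^ q), sub_self, integral_rpow (Or.inl hq),
    Real.zero_rpow (by linarith), sub_zero]

theorem integral_sub_cpow_mul_sub_cpow (α β : ℂ) {z x : ℝ} (h : z < x) :
    ∫ y in z..x, ((y - z : ℝ) : ℂ) ^ (α - 1) * ((x - y : ℝ) : ℂ) ^ (β - 1) =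
      betaIntegral α β * ((x - z : ℝ) : ℂ) ^ (α + β - 1) := by
  rw [mul_comm, ← betaIntegral_scaled α β (sub_pos.2 h), ← sub_self z,
    ← integral_comp_sub_right _ z]
  push_cast
  simp_rw [sub_sub_sub_cancel_right]

end intervalIntegral

def triangle (c x : ℝ) : Set (ℝ × ℝ) := {p | c < p.2 ∧ p.2 < p.1 ∧ p.1 < x}

section Triangle

variable {c x : ℝ}

theorem isOpen_triangle (c x : ℝ) : IsOpen (triangle c x) :=
  (isOpen_lt continuous_const continuous_snd).inter
    ((isOpen_lt continuous_snd continuous_fst).inter (isOpen_lt continuous_fst continuous_const))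

theorem indicator_triangle_apply {M : Type*} [Zero M] (F : ℝ × ℝ → M) (y z : ℝ) :
    (triangle c x).indicator F (y, z) =
      (Ioo c x).indicator (fun y => (Ioo c y).indicator (fun z => F (y, z)) z) y := by
  simp only [indicator_apply, triangle, mem_Ioo]
  grind

theorem indicator_triangle_apply' {M : Type*} [Zero M] (F : ℝ × ℝ → M) (y z : ℝ) :
    (triangle c x).indicator F (y, z) =
      (Ioo c x).indicator (fun z => (Ioo z x).indicator (fun y => F (y, z)) y) z := by
  simp only [indicator_apply, triangle, mem_Ioo]
  grind

variable {E : Type*} [NormedAddCommGroup E] [NormedSpace ℝ E]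

theorem integral_indicator_triangle_apply (F : ℝ × ℝ → E) (y : ℝ) :
    ∫ z, (triangle c x).indicator F (y, z) =
      (Ioo c x).indicator (fun y => ∫ z in Ioo c y, F (y, z)) y := by
  by_cases hy : y ∈ Ioo c x <;>
    simp [indicator_triangle_apply, hy, MeasureTheory.integral_indicator measurableSet_Ioo]

theorem setIntegral_triangle_eq_integral_integral {F : ℝ × ℝ → E}
    (hF : IntegrableOn F (triangle c x)) :
    ∫ p in triangle c x, F p = ∫ y in Ioo c x, ∫ z in Ioo c y, F (y, z) := by
  have hT := (isOpen_triangle c x).measurableSet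
  rw [← MeasureTheory.integral_indicator hT, Measure.volume_eq_prod,
    integral_prod _ ((integrable_indicator_iff hT).2 hF),
    ← MeasureTheory.integral_indicator measurableSet_Ioo]
  simp_rw [integral_indicator_triangle_apply]

theorem setIntegral_triangle_eq_integral_integral_swap {F : ℝ × ℝ → E}
    (hF : IntegrableOn F (triangle c x)) :
    ∫ p in triangle c x, F p = ∫ z in Ioo c x, ∫ y in Ioo z x, F (y, z) := by
  have hT := (isOpen_triangle c x).measurableSet
  rw [← MeasureTheory.integral_indicator hT, Measure.volume_eq_prod,
    integral_prod_symm _ ((integrable_indicator_iff hT).2 hF),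
    ← MeasureTheory.integral_indicator measurableSet_Ioo]
  congr 1 with z
  by_cases hz : z ∈ Ioo c x <;>
    simp [indicator_triangle_apply', hz, MeasureTheory.integral_indicator measurableSet_Ioo]

theorem integrableOn_triangle_rpow_mul_rpow {p q : ℝ} (hp : -1 < p) (hq : -1 < q) (c x : ℝ) :
    IntegrableOn (fun w : ℝ × ℝ => (x - w.1) ^ p * (w.1 - w.2) ^ q) (triangle c x) := by
  have hT := (isOpen_triangle c x).measurableSet
  have hnorm : (fun y => ∫ z, ‖(triangle c x).indicator
      (fun w : ℝ × ℝ => (x - w.1) ^ p * (w.1 - w.2) ^ q) (y, z)‖) =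
      (Ioo c x).indicator (fun y => (x - y) ^ p * ((y - c) ^ (q + 1) / (q + 1))) := by
    ext y
    simp_rw [norm_indicator_eq_indicator_norm, integral_indicator_triangle_apply]
    by_cases hy : y ∈ Ioo c x
    · rw [indicator_of_mem hy, indicator_of_mem hy, ← integral_sub_rpow hq,
        ← intervalIntegral.integral_const_mul, integral_of_le hy.1.le,
        integral_Ioc_eq_integral_Ioo]
      refine setIntegral_congr_fun measurableSet_Ioo fun z hz => ?_
      exact Real.norm_of_nonneg (mul_nonneg (Real.rpow_nonneg (sub_nonneg.2 hy.2.le) _)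
        (Real.rpow_nonneg (sub_nonneg.2 hz.2.le) _))
    · simp [hy]
  rw [← integrable_indicator_iff hT, Measure.volume_eq_prod, integrable_prod_iff
    ((by fun_prop : Measurable _).indicator hT).aestronglyMeasurable, hnorm,
    integrable_indicator_iff measurableSet_Ioo]
  constructor
  · refine ae_of_all _ fun y => ?_
    by_cases hy : y ∈ Ioo c x
    · have : IntegrableOn (fun z => (x - y) ^ p * (y - z) ^ q) (Ioo c y) :=
        ((intervalIntegrable_sub_rpow hq c y).1.mono_set Ioo_subset_Ioc_self).const_mul _
      simpa [indicator_triangle_apply, hy, integrable_indicator_iff measurableSet_Ioo]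
    · simp [indicator_triangle_apply, hy]
  · exact ((intervalIntegrable_sub_rpow hp c x).mul_continuousOn
      ((continuousOn_id.sub continuousOn_const).rpow_const (fun _ _ => Or.inr (by linarith))
        |>.div_const _)).1.mono_set Ioo_subset_Ioc_self

end Triangle

theorem integrableOn_triangle_kernel {c x : ℝ} {α β : ℂ} (hα : 0 < α.re) (hβ : 0 < β.re)
    {f : ℝ → ℂ} (hf : ContinuousOn f (Icc c x)) :
    IntegrableOn (fun w : ℝ × ℝ =>
      ((x - w.1 : ℝ) : ℂ) ^ (β - 1) * (((w.1 - w.2 : ℝ) : ℂ) ^ (α - 1) * f w.2))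
      (triangle c x) := by
  obtain ⟨M, hM⟩ := isCompact_Icc.exists_bound_of_continuousOn hf
  have hT := isOpen_triangle c x
  have hcont : ContinuousOn (fun w : ℝ × ℝ =>
      ((x - w.1 : ℝ) : ℂ) ^ (β - 1) * (((w.1 - w.2 : ℝ) : ℂ) ^ (α - 1) * f w.2))
      (triangle c x) := by
    refine ContinuousOn.mul ?_ (ContinuousOn.mul ?_ ?_)
    · exact (by fun_prop : Continuous fun w : ℝ × ℝ => ((x - w.1 : ℝ) : ℂ)).continuousOn
        |>.cpow_const fun w hw => ofReal_mem_slitPlane.2 (sub_pos.2 hw.2.2)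
    · exact (by fun_prop : Continuous fun w : ℝ × ℝ => ((w.1 - w.2 : ℝ) : ℂ)).continuousOn
        |>.cpow_const fun w hw => ofReal_mem_slitPlane.2 (sub_pos.2 hw.2.1)
    · exact hf.comp continuousOn_snd fun w hw => ⟨hw.1.le, hw.2.1.le.trans hw.2.2.le⟩
  refine ((integrableOn_triangle_rpow_mul_rpow (p := β.re - 1) (q := α.re - 1)
    (by linarith) (by linarith) c x).const_mul M).mono'
    (hcont.aestronglyMeasurable hT.measurableSet)
    ((ae_restrict_iff' hT.measurableSet).2 (ae_of_all _ fun w hw => ?_))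
  obtain ⟨h1, h2, h3⟩ := hw
  rw [norm_mul, norm_mul, norm_cpow_eq_rpow_re_of_pos (sub_pos.2 h3),
    norm_cpow_eq_rpow_re_of_pos (sub_pos.2 h2), sub_re, sub_re, one_re]
  have hfw : ‖f w.2‖ ≤ M := hM _ ⟨h1.le, h2.le.trans h3.le⟩
  have hpos : 0 ≤ (x - w.1) ^ (β.re - 1) * (w.1 - w.2) ^ (α.re - 1) :=
    mul_nonneg (Real.rpow_nonneg (sub_nonneg.2 h3.le) _) (Real.rpow_nonneg (sub_nonneg.2 h2.le) _)
  nlinarith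

theorem intervalIntegral.integral_sub_cpow_mul_integral_sub_cpow_mul {c x : ℝ} (hcx : c ≤ x)
    {α β : ℂ} (hα : 0 < α.re) (hβ : 0 < β.re) {f : ℝ → ℂ} (hf : ContinuousOn f (Icc c x)) :
    ∫ y in c..x, ((x - y : ℝ) : ℂ) ^ (β - 1) * ∫ z in c..y, ((y - z : ℝ) : ℂ) ^ (α - 1) * f z =
      betaIntegral α β * ∫ z in c..x, ((x - z : ℝ) : ℂ) ^ (α + β - 1) * f z := by
  have hK := integrableOn_triangle_kernel hα hβ hf
  -- Work on open intervals: at `z = x` the inner integral vanishes, while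
  -- `0 ^ (α + β - 1) = 1` when `α + β = 1`.
  calc _ = ∫ y in Ioo c x, ∫ z in Ioo c y,
        ((x - y : ℝ) : ℂ) ^ (β - 1) * (((y - z : ℝ) : ℂ) ^ (α - 1) * f z) := by
        rw [integral_of_le hcx, integral_Ioc_eq_integral_Ioo]
        refine setIntegral_congr_fun measurableSet_Ioo fun y hy => ?_
        rw [integral_of_le hy.1.le, integral_Ioc_eq_integral_Ioo,
          ← MeasureTheory.integral_const_mul]
    _ = ∫ z in Ioo c x, ∫ y in Ioo z x,
        ((x - y : ℝ) : ℂ) ^ (β - 1) * (((y - z : ℝ) : ℂ) ^ (α - 1) * f z) := by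
        rw [← setIntegral_triangle_eq_integral_integral hK,
          setIntegral_triangle_eq_integral_integral_swap hK]
    _ = ∫ z in Ioo c x, betaIntegral α β * (((x - z : ℝ) : ℂ) ^ (α + β - 1) * f z) := by
        refine setIntegral_congr_fun measurableSet_Ioo fun z hz => ?_
        rw [← integral_Ioc_eq_integral_Ioo, ← integral_of_le hz.2.le, ← mul_assoc,
          ← integral_sub_cpow_mul_sub_cpow α β hz.2, ← intervalIntegral.integral_mul_const]
        congr 1 with y
        ring
    _ = _ := by
        rw [MeasureTheory.integral_const_mul, integral_of_le hcx, integral_Ioc_eq_integral_Ioo]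

/-- Composition of Riemann–Liouville fractional integrals with finite basepoint:
`D_{c+}^ν (D_{c+}^μ f) (x) = D_{c+}^{μ+ν} f (x)` for `Re μ < 0`, `Re ν < 0`,
and `f` continuous on `[c, x]`. -/
theorem rl_integral_composition (c x : ℝ) (hx : c < x) (μ ν : ℂ)
    (hμ : μ.re < 0) (hν : ν.re < 0) (f : ℝ → ℂ)
    (hf : ContinuousOn f (Set.Icc c x)) :
    (1 / Complex.Gamma (-ν)) *
        ∫ y in c..x, ((x - y : ℝ) : ℂ) ^ (-ν - 1) *
          ((1 / Complex.Gamma (-μ)) *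
            ∫ z in c..y, ((y - z : ℝ) : ℂ) ^ (-μ - 1) * f z) =
      (1 / Complex.Gamma (-(μ + ν))) *
        ∫ z in c..x, ((x - z : ℝ) : ℂ) ^ (-(μ + ν) - 1) * f z := by
  have hα : 0 < (-μ).re := by simpa using hμ
  have hβ : 0 < (-ν).re := by simpa using hν
  simp_rw [mul_left_comm _ (1 / Gamma (-μ)), intervalIntegral.integral_const_mul]
  rw [integral_sub_cpow_mul_integral_sub_cpow_mul hx.le hα hβ hf, neg_add,
    betaIntegral_eq_Gamma_mul_div _ _ hα hβ]
  field_simp [Gamma_ne_zero_of_re_pos hα, Gamma_ne_zero_of_re_pos hβ]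
end

section
/- Let μ, ν ∈ ℂ satisfy Re μ < 0 and Re ν < 0, and let f : ℝ → ℂ be a Schwartz function. Then for every x ∈ ℝ, D_+^ν(D_+^μ f)(x) = D_+^{μ+ν} f(x); explicitly, (1/Γ(−ν)) ∫_{−∞}^x (x−y)^{−ν−1} · ((1/Γ(−μ)) ∫_{−∞}^y (y−z)^{−μ−1} f(z) dz) dy = (1/Γ(−μ−ν)) ∫_{−∞}^x (x−z)^{−μ−ν−1} f(z) dz. -/
/-!
Write `I^α f = D_+^{-α} f`. Swapping the order of integration over the triangle
`z ≤ y ≤ x` (Fubini), the inner integral is a Beta integral,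
`∫_z^x (x - y)^(α-1) (y - z)^(β-1) dy = (x - z)^(α+β-1) B(β, α)`, and
`B(β, α) = Γ(α) Γ(β) / Γ(α + β)`. The same computation with absolute values shows that the
double integral converges absolutely as soon as `I^(Re α + Re β) |f| (x)` does, which holds for
a Schwartz function: near `x` the kernel singularity is integrable, and towards `-∞` the
rapid decay of `f` beats the polynomial growth of the kernel.
-/

open MeasureTheory Complex SchwartzMap Set

section BetaKernel

variable {s t : ℂ} {a b : ℝ}

theorem intervalIntegrable_betaKernel (hs : 0 < s.re) (ht : 0 < t.re) (hab : a ≤ b) :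
    IntervalIntegrable (fun y => ((y - a : ℝ) : ℂ) ^ (s - 1) * ((b - y : ℝ) : ℂ) ^ (t - 1))
      volume a b := by
  rcases hab.eq_or_lt with rfl | hab
  · exact IntervalIntegrable.refl
  have hc : 0 < b - a := sub_pos.2 hab
  have h := ((betaIntegral_convergent hs ht).comp_mul_right (c := (b - a)⁻¹)).comp_sub_right a
  simp only [zero_div, one_div, inv_inv, zero_add, sub_add_cancel] at h
  have h' := h.const_mul (((b - a : ℝ) : ℂ) ^ (s - 1) * ((b - a : ℝ) : ℂ) ^ (t - 1))
  rw [intervalIntegrable_iff_integrableOn_Ioc_of_le hab.le] at h' ⊢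
  refine h'.congr_fun (fun y ⟨hay, hyb⟩ => ?_) measurableSet_Ioc
  have hu : 0 ≤ (y - a) * (b - a)⁻¹ := mul_nonneg (by linarith) (by positivity)
  have hu' : 0 ≤ 1 - (y - a) * (b - a)⁻¹ := by
    rw [sub_nonneg, ← div_eq_mul_inv, div_le_one hc]; linarith
  have e₁ : ((y - a : ℝ) : ℂ) = ((b - a : ℝ) : ℂ) * (((y - a) * (b - a)⁻¹ : ℝ) : ℂ) := by
    rw [← ofReal_mul]; congr 1; field_simp
  have e₂ : ((b - y : ℝ) : ℂ) = ((b - a : ℝ) : ℂ) * ((1 - (y - a) * (b - a)⁻¹ : ℝ) : ℂ) := by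
    rw [← ofReal_mul]; congr 1; field_simp; ring
  rw [e₁, e₂, mul_cpow_ofReal_nonneg hc.le hu, mul_cpow_ofReal_nonneg hc.le hu']
  push_cast
  ring

theorem integral_betaKernel (hab : a < b) :
    ∫ y in a..b, ((y - a : ℝ) : ℂ) ^ (s - 1) * ((b - y : ℝ) : ℂ) ^ (t - 1) =
      ((b - a : ℝ) : ℂ) ^ (s + t - 1) * betaIntegral s t := by
  have h := intervalIntegral.integral_comp_sub_right
    (fun u : ℝ => (u : ℂ) ^ (s - 1) * (((b - a : ℝ) : ℂ) - u) ^ (t - 1)) a (a := a) (b := b)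
  rw [sub_self, betaIntegral_scaled s t (sub_pos.2 hab)] at h
  rw [← h]
  congr! 3 with y
  congr 1
  push_cast; ring

theorem integral_norm_betaKernel (hab : a < b) :
    ∫ y in a..b, ‖((y - a : ℝ) : ℂ) ^ (s - 1) * ((b - y : ℝ) : ℂ) ^ (t - 1)‖ =
      (b - a) ^ (s.re + t.re - 1) * (betaIntegral s.re t.re).re := by
  have hnorm : ∀ y ∈ Ioo a b,
      ((‖((y - a : ℝ) : ℂ) ^ (s - 1) * ((b - y : ℝ) : ℂ) ^ (t - 1)‖ : ℝ) : ℂ) =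
        ((y - a : ℝ) : ℂ) ^ ((s.re : ℂ) - 1) * ((b - y : ℝ) : ℂ) ^ ((t.re : ℂ) - 1) := by
    rintro y ⟨hay, hyb⟩
    rw [norm_mul, norm_cpow_eq_rpow_re_of_pos (sub_pos.2 hay),
      norm_cpow_eq_rpow_re_of_pos (sub_pos.2 hyb), ofReal_mul,
      ofReal_cpow (sub_pos.2 hay).le, ofReal_cpow (sub_pos.2 hyb).le]
    simp
  have hcast :
      ((∫ y in a..b, ‖((y - a : ℝ) : ℂ) ^ (s - 1) * ((b - y : ℝ) : ℂ) ^ (t - 1)‖ : ℝ) : ℂ) =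
      ∫ y in a..b, ((y - a : ℝ) : ℂ) ^ ((s.re : ℂ) - 1) * ((b - y : ℝ) : ℂ) ^ ((t.re : ℂ) - 1) := by
    rw [← intervalIntegral.integral_ofReal, intervalIntegral.integral_of_le hab.le,
      intervalIntegral.integral_of_le hab.le, integral_Ioc_eq_integral_Ioo,
      integral_Ioc_eq_integral_Ioo]
    exact setIntegral_congr_fun measurableSet_Ioo hnorm
  rw [integral_betaKernel hab, ← ofReal_add, ← ofReal_one, ← ofReal_sub,
    ← ofReal_cpow (sub_pos.2 hab).le] at hcast
  simpa using congrArg re hcast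

end BetaKernel

theorem intervalIntegrable_cpow_sub_mul {s : ℂ} (hs : 0 < s.re) {f : ℝ → ℂ} (hf : Continuous f)
    (a x : ℝ) : IntervalIntegrable (fun z => ((x - z : ℝ) : ℂ) ^ (s - 1) * f z) volume a x := by
  have h := (intervalIntegral.intervalIntegrable_cpow' (a := x - a) (b := 0) (r := s - 1)
    (by simpa using hs)).comp_sub_left x
  rw [sub_sub_cancel, sub_zero] at h
  exact h.mul_continuousOn hf.continuousOn

theorem SchwartzMap.integrableOn_cpow_sub_mul_Iic_sub_one (f : 𝓢(ℝ, ℂ)) (s : ℂ) (x : ℝ) :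
    IntegrableOn (fun z => ((x - z : ℝ) : ℂ) ^ s * f z) (Iic (x - 1)) := by
  set n := ⌈s.re⌉₊
  have hdom : Integrable (fun z => ‖z - x‖ ^ n * ‖f z‖) := by
    simpa using ((f.compSubConstCLM ℝ (-x)).integrable_pow_mul volume n).comp_sub_right x
  have hmeas : Measurable fun z : ℝ => ((x - z : ℝ) : ℂ) ^ s := by fun_prop
  refine hdom.integrableOn.mono'
    (hmeas.aestronglyMeasurable.mul f.continuous.aestronglyMeasurable) ?_
  filter_upwards [ae_restrict_mem measurableSet_Iic] with z hz
  have hxz : 1 ≤ x - z := by linarith [mem_Iic.1 hz]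
  rw [norm_mul, norm_cpow_eq_rpow_re_of_pos (by linarith), Real.norm_eq_abs,
    abs_sub_comm, abs_of_pos (by linarith), ← Real.rpow_natCast]
  gcongr
  exact Nat.le_ceil _

theorem SchwartzMap.integrableOn_cpow_sub_mul_Iic (f : 𝓢(ℝ, ℂ)) {s : ℂ} (hs : 0 < s.re) (x : ℝ) :
    IntegrableOn (fun z => ((x - z : ℝ) : ℂ) ^ (s - 1) * f z) (Iic x) := by
  rw [← Iic_union_Ioc_eq_Iic (sub_one_lt x).le]
  exact (f.integrableOn_cpow_sub_mul_Iic_sub_one (s - 1) x).union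
    ((intervalIntegrable_cpow_sub_mul hs f.continuous _ x).1)

/-- The Riemann–Liouville integral of order `α` with basepoint `-∞`, i.e. `D_+^{-α}`. -/
noncomputable def riemannLiouvilleIntegral (α : ℂ) (f : ℝ → ℂ) (x : ℝ) : ℂ :=
  1 / Gamma α * ∫ y in Iic x, ((x - y : ℝ) : ℂ) ^ (α - 1) * f y

theorem integral_indicator_Ici_restrict_Iic {E : Type*} [NormedAddCommGroup E] [NormedSpace ℝ E]
    (φ : ℝ → E) {z x : ℝ} (hzx : z ≤ x) :
    ∫ y, (Ici z).indicator φ y ∂volume.restrict (Iic x) = ∫ y in z..x, φ y := by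
  rw [integral_indicator measurableSet_Ici, Measure.restrict_restrict measurableSet_Ici,
    Ici_inter_Iic, integral_Icc_eq_integral_Ioc, intervalIntegral.integral_of_le hzx]

theorem ae_lt_of_restrict_Iic (μ : Measure ℝ) [NullSingletonClass μ] (x : ℝ) :
    ∀ᵐ z ∂μ.restrict (Iic x), z < x := by
  rw [← Measure.restrict_congr_set Iio_ae_eq_Iic]
  exact ae_restrict_mem measurableSet_Iio

namespace RiemannLiouville

noncomputable def iteratedIntegrand (α β : ℂ) (f : ℝ → ℂ) (x y z : ℝ) : ℂ :=
  (Iic y).indicator (fun z => ((x - y : ℝ) : ℂ) ^ (α - 1) * (((y - z : ℝ) : ℂ) ^ (β - 1) * f z)) z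

variable {α β : ℂ} {f : ℝ → ℂ} {x : ℝ}

theorem iteratedIntegrand_eq_indicator_Ici (z : ℝ) :
    (fun y => iteratedIntegrand α β f x y z) = (Ici z).indicator
      (fun y => ((y - z : ℝ) : ℂ) ^ (β - 1) * ((x - y : ℝ) : ℂ) ^ (α - 1) * f z) := by
  ext y
  simp only [iteratedIntegrand, indicator_apply, mem_Iic, mem_Ici]
  split_ifs <;> ring

theorem integral_iteratedIntegrand_left {z : ℝ} (hzx : z < x) :
    ∫ y, iteratedIntegrand α β f x y z ∂volume.restrict (Iic x) =
      betaIntegral β α * (((x - z : ℝ) : ℂ) ^ (α + β - 1) * f z) := by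
  rw [iteratedIntegrand_eq_indicator_Ici, integral_indicator_Ici_restrict_Iic _ hzx.le,
    intervalIntegral.integral_mul_const, integral_betaKernel hzx, add_comm β]
  ring

theorem integral_norm_iteratedIntegrand_left {z : ℝ} (hzx : z < x) :
    ∫ y, ‖iteratedIntegrand α β f x y z‖ ∂volume.restrict (Iic x) =
      (betaIntegral β.re α.re).re * ‖((x - z : ℝ) : ℂ) ^ (α + β - 1) * f z‖ := by
  have hnorm : (fun y => ‖iteratedIntegrand α β f x y z‖) = (Ici z).indicator
      (fun y => ‖((y - z : ℝ) : ℂ) ^ (β - 1) * ((x - y : ℝ) : ℂ) ^ (α - 1)‖ * ‖f z‖) := by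
    ext y
    rw [congrFun (iteratedIntegrand_eq_indicator_Ici z), norm_indicator_eq_indicator_norm]
    simp only [norm_mul]
  rw [hnorm, integral_indicator_Ici_restrict_Iic _ hzx.le, intervalIntegral.integral_mul_const,
    integral_norm_betaKernel hzx, norm_mul, norm_cpow_eq_rpow_re_of_pos (sub_pos.2 hzx), sub_re,
    add_re, add_comm β.re, one_re]
  ring

theorem integral_iteratedIntegrand_right {y : ℝ} (hyx : y ≤ x) :
    ∫ z, iteratedIntegrand α β f x y z ∂volume.restrict (Iic x) =
      ((x - y : ℝ) : ℂ) ^ (α - 1) * ∫ z in Iic y, ((y - z : ℝ) : ℂ) ^ (β - 1) * f z := by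
  unfold iteratedIntegrand
  rw [integral_indicator measurableSet_Iic,
    Measure.restrict_restrict measurableSet_Iic, Iic_inter_Iic, inf_of_le_left hyx,
    integral_const_mul]

theorem integrable_iteratedIntegrand (hα : 0 < α.re) (hβ : 0 < β.re)
    (hf : AEStronglyMeasurable f volume)
    (hint : IntegrableOn (fun z => ((x - z : ℝ) : ℂ) ^ (α + β - 1) * f z) (Iic x)) :
    Integrable (Function.uncurry (iteratedIntegrand α β f x))
      ((volume.restrict (Iic x)).prod (volume.restrict (Iic x))) := by
  have hmeas : AEStronglyMeasurable (Function.uncurry (iteratedIntegrand α β f x))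
      ((volume.restrict (Iic x)).prod (volume.restrict (Iic x))) := by
    have hK₁ : Measurable fun p : ℝ × ℝ => ((x - p.1 : ℝ) : ℂ) ^ (α - 1) := by fun_prop
    have hK₂ : Measurable fun p : ℝ × ℝ => ((p.1 - p.2 : ℝ) : ℂ) ^ (β - 1) := by fun_prop
    exact (hK₁.aestronglyMeasurable.mul (hK₂.aestronglyMeasurable.mul
      hf.restrict.comp_snd)).indicator (measurableSet_le measurable_snd measurable_fst)
  rw [integrable_prod_iff' hmeas]
  constructor
  · filter_upwards [ae_lt_of_restrict_Iic volume x] with z hz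
    simp only [Function.uncurry_apply_pair]
    rw [iteratedIntegrand_eq_indicator_Ici, integrable_indicator_iff measurableSet_Ici,
      IntegrableOn, Measure.restrict_restrict measurableSet_Ici, Ici_inter_Iic,
      ← IntegrableOn, integrableOn_Icc_iff_integrableOn_Ioc,
      ← intervalIntegrable_iff_integrableOn_Ioc_of_le hz.le]
    exact (intervalIntegrable_betaKernel hβ hα hz.le).mul_const (f z)
  · refine (hint.norm.const_mul (betaIntegral β.re α.re).re).congr ?_
    filter_upwards [ae_lt_of_restrict_Iic volume x] with z hz
    exact (integral_norm_iteratedIntegrand_left hz).symm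

theorem riemannLiouvilleIntegral_riemannLiouvilleIntegral (hα : 0 < α.re) (hβ : 0 < β.re)
    (hf : AEStronglyMeasurable f volume)
    (hint : IntegrableOn (fun z => ((x - z : ℝ) : ℂ) ^ (α + β - 1) * f z) (Iic x)) :
    riemannLiouvilleIntegral α (riemannLiouvilleIntegral β f) x =
      riemannLiouvilleIntegral (α + β) f x := by
  have hinner : ∫ y in Iic x, ((x - y : ℝ) : ℂ) ^ (α - 1) * riemannLiouvilleIntegral β f y =
      1 / Gamma β * ∫ y, ∫ z, iteratedIntegrand α β f x y z ∂volume.restrict (Iic x)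
        ∂volume.restrict (Iic x) := by
    rw [← integral_const_mul]
    refine setIntegral_congr_fun measurableSet_Iic fun y hy => ?_
    rw [integral_iteratedIntegrand_right hy, riemannLiouvilleIntegral]
    ring
  have houter : ∫ z, ∫ y, iteratedIntegrand α β f x y z ∂volume.restrict (Iic x)
      ∂volume.restrict (Iic x) =
        betaIntegral β α * ∫ z in Iic x, ((x - z : ℝ) : ℂ) ^ (α + β - 1) * f z := by
    rw [← integral_const_mul]
    exact integral_congr_ae ((ae_lt_of_restrict_Iic volume x).mono
      fun z hz => integral_iteratedIntegrand_left hz)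
  have hB : betaIntegral β α = Gamma α * Gamma β / Gamma (α + β) := by
    rw [eq_div_iff (Gamma_ne_zero_of_re_pos (by simp only [add_re]; positivity)), mul_comm,
      add_comm, ← Gamma_mul_Gamma_eq_betaIntegral hβ hα, mul_comm]
  rw [riemannLiouvilleIntegral, hinner, integral_integral_swap
    (integrable_iteratedIntegrand hα hβ hf hint), houter, hB, riemannLiouvilleIntegral]
  field_simp [Gamma_ne_zero_of_re_pos hα, Gamma_ne_zero_of_re_pos hβ]

end RiemannLiouville

/-- Composition of Riemann–Liouville fractional integrals with basepoint `-∞`: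
`D_+^ν (D_+^μ f) = D_+^{μ+ν} f` for `Re μ < 0`, `Re ν < 0`, and `f` Schwartz. -/
theorem rl_integral_composition_schwartz (μ ν : ℂ) (hμ : μ.re < 0) (hν : ν.re < 0)
    (f : SchwartzMap ℝ ℂ) (x : ℝ) :
    (1 / Complex.Gamma (-ν)) *
        ∫ y in Set.Iic x, ((x - y : ℝ) : ℂ) ^ (-ν - 1) *
          ((1 / Complex.Gamma (-μ)) *
            ∫ z in Set.Iic y, ((y - z : ℝ) : ℂ) ^ (-μ - 1) * f z) =
      (1 / Complex.Gamma (-(μ + ν))) *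
        ∫ z in Set.Iic x, ((x - z : ℝ) : ℂ) ^ (-(μ + ν) - 1) * f z := by
  have hν' : 0 < (-ν).re := by simpa using hν
  have hμ' : 0 < (-μ).re := by simpa using hμ
  have hμν : 0 < (-ν + -μ).re := by simp only [add_re]; positivity
  rw [neg_add_rev]
  exact RiemannLiouville.riemannLiouvilleIntegral_riemannLiouvilleIntegral hν' hμ'
    f.continuous.aestronglyMeasurable (f.integrableOn_cpow_sub_mul_Iic hμν x)
end

section
/- Let c ∈ ℝ, let n ∈ ℕ with n ≥ 1, let μ ∈ ℂ with Re μ < 0, and let f : ℝ → ℂ be n times continuously differentiable on [c, ∞). Then for every x > c, the n-th derivative at x of the function u(t) := (1/Γ(−μ)) ∫_c^t (t−y)^{−μ−1} f(y) dy satisfies u^{(n)}(x) = (1/Γ(−μ)) ∫_c^x (x−y)^{−μ−1} f^{(n)}(y) dy + Σ_{k=1}^n ((x−c)^{−μ−k} / Γ(−μ−k+1)) · f^{(n−k)}(c). (That is, D_{c+}^n(D_{c+}^μ f) = D_{c+}^μ(D_{c+}^n f) + Σ_{k=1}^n ((x−c)^{−μ−k}/Γ(−μ−k+1)) f^{(n−k)}(c).)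 -/
/-!
The substitution `y = c + (t - c) s` writes `∫_c^t (t - y)^(b-1) f(y) dy` as
`(t - c)^b ∫_0^1 (1 - s)^(b-1) f(c + (t - c) s) ds`, an integral over a fixed interval that can be
differentiated under the integral sign since `(1 - s)^(b-1)` is integrable for `Re b > 0`.
After the product rule, an integration by parts in `s` turns the derivative at `x` into
`(x - c)^(b-1) f(c) + ∫_c^x (x - y)^(b-1) f'(y) dy`; with `b = -μ` this is
`D (D^μ f) = D^μ (D f) + (x - c)^(-μ-1) / Γ(-μ) · f(c)`.
Iterating, the boundary terms are differentiated with
`d/dt (t - c)^z / Γ(z + 1) = (t - c)^(z-1) / Γ(z)`, which shifts `k` to `k + 1` in the sum.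
-/

open MeasureTheory intervalIntegral Complex Finset

open Filter Topology

theorem Complex.cpow_sub_one_mul_self {b : ℂ} (hb : b ≠ 0) (z : ℂ) : z ^ (b - 1) * z = z ^ b := by
  rcases eq_or_ne z 0 with rfl | hz
  · simp [zero_cpow hb]
  · conv_rhs => rw [← sub_add_cancel b 1, cpow_add _ _ hz, cpow_one]

theorem Complex.div_Gamma_add_one (z : ℂ) : z / Gamma (z + 1) = 1 / Gamma z := by
  rcases eq_or_ne z 0 with rfl | hz
  · simp
  · rw [Gamma_add_one z hz, div_mul_cancel_left₀ hz, one_div]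

theorem HasDerivAt.ofReal_cpow_const {g : ℝ → ℝ} {g' x : ℝ} (hg : HasDerivAt g g' x)
    (hx : 0 < g x) (w : ℂ) :
    HasDerivAt (fun t => (g t : ℂ) ^ w) (g' * (w * (g x : ℂ) ^ (w - 1))) x := by
  have h := ((hasDerivAt_id (g x : ℂ)).cpow_const (c := w) (ofReal_mem_slitPlane.2 hx))
  simpa [Function.comp_def] using h.comp_ofReal.scomp x hg

theorem hasDerivAt_sub_cpow_div_Gamma (z : ℂ) {c x : ℝ} (hx : c < x) :
    HasDerivAt (fun t : ℝ => ((t - c : ℝ) : ℂ) ^ z / Gamma (z + 1))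
      (((x - c : ℝ) : ℂ) ^ (z - 1) / Gamma z) x := by
  refine ((((hasDerivAt_id x).sub_const c).ofReal_cpow_const (sub_pos.2 hx) z).div_const
    (Gamma (z + 1))).congr_deriv ?_
  rw [id, ofReal_one, one_mul, div_eq_mul_one_div _ (Gamma z), ← div_Gamma_add_one]
  ring

theorem Finset.sum_Icc_one_succ {M : Type*} [AddCommMonoid M] (a : ℕ → M) (m : ℕ) :
    ∑ k ∈ Icc 1 (m + 1), a k = a 1 + ∑ k ∈ Icc 1 m, a (k + 1) := by
  induction m with
  | zero => simp
  | succ m ih => rw [sum_Icc_succ_top (by omega), ih, sum_Icc_succ_top (by omega), add_assoc]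

theorem ContDiffOn.hasDerivAt_iteratedDerivWithin_Ici {F : Type*} [NormedAddCommGroup F]
    [NormedSpace ℝ F] {f : ℝ → F} {c : ℝ} {n m : ℕ} (hf : ContDiffOn ℝ n f (Set.Ici c))
    (hm : m < n) {y : ℝ} (hy : c < y) :
    HasDerivAt (iteratedDerivWithin m f (Set.Ici c))
      (iteratedDerivWithin (m + 1) f (Set.Ici c) y) y := by
  rw [iteratedDerivWithin_succ]
  exact ((hf.differentiableOn_iteratedDerivWithin (by exact_mod_cast hm) (uniqueDiffOn_Ici c)) y
    hy.le).hasDerivWithinAt.hasDerivAt (Ici_mem_nhds hy)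

theorem intervalIntegrable_one_sub_cpow {ν : ℂ} (hν : -1 < ν.re) :
    IntervalIntegrable (fun s : ℝ => ((1 - s : ℝ) : ℂ) ^ ν) volume 0 1 := by
  simpa using ((intervalIntegrable_cpow' (a := 0) (b := 1) hν).comp_sub_left 1).symm

theorem integral_sub_cpow_mul_eq {c t : ℝ} (h : c < t) (ν : ℂ) (g : ℝ → ℂ) :
    ∫ y in c..t, ((t - y : ℝ) : ℂ) ^ ν * g y =
      ((t - c : ℝ) : ℂ) ^ (ν + 1) *
        ∫ s in (0:ℝ)..1, ((1 - s : ℝ) : ℂ) ^ ν * g (c + (t - c) * s) := by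
  have hL : 0 < t - c := sub_pos.2 h
  have hsubst := smul_integral_comp_add_mul (a := 0) (b := 1)
    (fun y => ((t - y : ℝ) : ℂ) ^ ν * g y) (t - c) c
  simp only [mul_zero, add_zero, mul_one, add_sub_cancel, real_smul] at hsubst
  rw [← hsubst, cpow_add _ _ (ofReal_ne_zero.2 hL.ne'), cpow_one, mul_comm _ ((t - c : ℝ) : ℂ),
    mul_assoc, ← intervalIntegral.integral_const_mul (((t - c : ℝ) : ℂ) ^ ν)]
  congr 1
  refine intervalIntegral.integral_congr fun s hs => ?_
  rw [Set.uIcc_of_le zero_le_one] at hs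
  have hsplit : t - (c + (t - c) * s) = (t - c) * (1 - s) := by ring
  rw [hsplit, ofReal_mul, mul_cpow_ofReal_nonneg hL.le (by linarith [hs.2]), mul_assoc]

theorem integral_one_sub_cpow_mul_deriv {b : ℂ} (hb : 0 < b.re) {φ φ' : ℝ → ℂ}
    (hφ : ContinuousOn φ (Set.Icc 0 1)) (hφ' : ContinuousOn φ' (Set.Icc 0 1))
    (hd : ∀ s ∈ Set.Ioo (0:ℝ) 1, HasDerivAt φ (φ' s) s) :
    ∫ s in (0:ℝ)..1, ((1 - s : ℝ) : ℂ) ^ b * φ' s =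
      b * (∫ s in (0:ℝ)..1, ((1 - s : ℝ) : ℂ) ^ (b - 1) * φ s) - φ 0 := by
  have hb0 : b ≠ 0 := fun h => by simp [h] at hb
  have hu : ContinuousOn (fun s : ℝ => ((1 - s : ℝ) : ℂ) ^ b) (Set.uIcc 0 1) :=
    ((continuous_ofReal_cpow_const hb).comp (continuous_sub_left 1)).continuousOn
  have huu' : ∀ s ∈ Set.Ioo (min 0 1) (max 0 1), HasDerivAt (fun s : ℝ => ((1 - s : ℝ) : ℂ) ^ b)
      (-(b * ((1 - s : ℝ) : ℂ) ^ (b - 1))) s := fun s hs => by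
    simp only [zero_le_one, min_eq_left, max_eq_right] at hs
    simpa using ((hasDerivAt_id s).const_sub 1).ofReal_cpow_const (sub_pos.2 hs.2) b
  have hu' : IntervalIntegrable (fun s : ℝ => -(b * ((1 - s : ℝ) : ℂ) ^ (b - 1))) volume 0 1 :=
    ((intervalIntegrable_one_sub_cpow (by rw [sub_re, one_re]; linarith)).const_mul b).neg
  rw [integral_mul_deriv_eq_deriv_mul_of_hasDerivAt hu (by rwa [Set.uIcc_of_le zero_le_one]) huu'
    (fun s hs => hd s (by simpa using hs)) hu' (hφ'.intervalIntegrable_of_Icc zero_le_one)]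
  simp only [sub_self, ofReal_zero, zero_cpow hb0, zero_mul, sub_zero, ofReal_one, one_cpow,
    one_mul, neg_mul, intervalIntegral.integral_neg, mul_assoc, intervalIntegral.integral_const_mul]
  ring

section

variable {μ : ℂ} {c : ℝ} {f f' : ℝ → ℂ}

theorem continuousOn_comp_affine (hf : ContinuousOn f (Set.Ici c)) {t : ℝ} (ht : c ≤ t) :
    ContinuousOn (fun s : ℝ => f (c + (t - c) * s)) (Set.Icc 0 1) :=
  hf.comp (by fun_prop) fun _ hs => le_add_of_nonneg_right (mul_nonneg (sub_nonneg.2 ht) hs.1)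

theorem hasDerivAt_integral_one_sub_cpow_mul_comp {ν : ℂ} (hν : -1 < ν.re)
    (hf : ContinuousOn f (Set.Ici c)) (hf' : ContinuousOn f' (Set.Ici c))
    (hd : ∀ y, c < y → HasDerivAt f (f' y) y) {x : ℝ} (hx : c < x) :
    HasDerivAt (fun t => ∫ s in (0:ℝ)..1, ((1 - s : ℝ) : ℂ) ^ ν * f (c + (t - c) * s))
      (∫ s in (0:ℝ)..1, ((1 - s : ℝ) : ℂ) ^ ν * (s * f' (c + (x - c) * s))) x := by
  obtain ⟨M, hM⟩ := isCompact_Icc.exists_bound_of_continuousOn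
    (hf'.mono (Set.Icc_subset_Ici_self : Set.Icc c (2 * x - c) ⊆ _))
  have hint := intervalIntegrable_one_sub_cpow hν
  have hmem : ∀ᵐ s, s ∈ Set.uIoc (0:ℝ) 1 → ∀ t ∈ Set.Ioo c (2 * x - c),
      0 < s ∧ s ≤ 1 ∧ c + (t - c) * s ∈ Set.Ioc c (2 * x - c) := by
    refine ae_of_all _ fun s hs t ht => ?_
    rw [Set.uIoc_of_le zero_le_one] at hs
    obtain ⟨hs0, hs1⟩ := hs
    obtain ⟨htc, htx⟩ := ht
    exact ⟨hs0, hs1, by nlinarith, by nlinarith⟩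
  refine (intervalIntegral.hasDerivAt_integral_of_dominated_loc_of_deriv_le
    (F' := fun t s => ((1 - s : ℝ) : ℂ) ^ ν * (s * f' (c + (t - c) * s)))
    (Ioo_mem_nhds hx (by linarith : x < 2 * x - c))
    (bound := fun s => ‖((1 - s : ℝ) : ℂ) ^ ν‖ * M) ?_ ?_ ?_ ?_ (hint.norm.mul_const M) ?_).2
  · filter_upwards [Ioi_mem_nhds hx] with t ht
    refine (hint.mul_continuousOn ?_).def'.aestronglyMeasurable
    rw [Set.uIcc_of_le zero_le_one]
    exact continuousOn_comp_affine hf ht.le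
  · refine hint.mul_continuousOn ?_
    rw [Set.uIcc_of_le zero_le_one]
    exact continuousOn_comp_affine hf hx.le
  · refine (hint.mul_continuousOn ?_).def'.aestronglyMeasurable
    rw [Set.uIcc_of_le zero_le_one]
    exact continuous_ofReal.continuousOn.mul (continuousOn_comp_affine hf' hx.le)
  · filter_upwards [hmem] with s hs hsI t ht
    obtain ⟨hs0, hs1, hy⟩ := hs hsI t ht
    rw [norm_mul, norm_mul, norm_real, Real.norm_of_nonneg hs0.le]
    gcongr
    exact (mul_le_of_le_one_left (norm_nonneg _) hs1).trans (hM _ (Set.Ioc_subset_Icc_self hy))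
  · filter_upwards [hmem] with s hs hsI t ht
    obtain ⟨-, -, hy⟩ := hs hsI t ht
    have haff : HasDerivAt (fun t => c + (t - c) * s) s t := by
      simpa using (((hasDerivAt_id t).sub_const c).mul_const s).const_add c
    have := ((hd _ hy.1).scomp t haff).const_mul (((1 - s : ℝ) : ℂ) ^ ν)
    simpa only [real_smul, Function.comp_def] using this

theorem mul_integral_one_sub_cpow_mul_comp {b : ℂ} (hb : 0 < b.re)
    (hf : ContinuousOn f (Set.Ici c)) (hf' : ContinuousOn f' (Set.Ici c))
    (hd : ∀ y, c < y → HasDerivAt f (f' y) y) {x : ℝ} (hx : c < x) :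
    b * ∫ s in (0:ℝ)..1, ((1 - s : ℝ) : ℂ) ^ (b - 1) * f (c + (x - c) * s) =
      f c + ((x - c : ℝ) : ℂ) * ∫ s in (0:ℝ)..1, ((1 - s : ℝ) : ℂ) ^ b * f' (c + (x - c) * s) := by
  have hφ : ∀ s ∈ Set.Ioo (0:ℝ) 1, HasDerivAt (fun s => f (c + (x - c) * s))
      (((x - c : ℝ) : ℂ) * f' (c + (x - c) * s)) s := fun s hs => by
    have haff : HasDerivAt (fun s => c + (x - c) * s) (x - c) s := by
      simpa using ((hasDerivAt_id s).const_mul (x - c)).const_add c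
    simpa only [real_smul, Function.comp_def] using
      (hd _ (lt_add_of_pos_right c (mul_pos (sub_pos.2 hx) hs.1))).scomp s haff
  have hibp := integral_one_sub_cpow_mul_deriv hb
    (φ' := fun s => ((x - c : ℝ) : ℂ) * f' (c + (x - c) * s)) (continuousOn_comp_affine hf hx.le)
    (continuousOn_const.mul (continuousOn_comp_affine hf' hx.le)) hφ
  simp only [mul_zero, add_zero, mul_left_comm _ ((x - c : ℝ) : ℂ),
    intervalIntegral.integral_const_mul] at hibp
  linear_combination -hibp

theorem hasDerivAt_integral_sub_cpow_mul {b : ℂ} (hb : 0 < b.re)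
    (hf : ContinuousOn f (Set.Ici c)) (hf' : ContinuousOn f' (Set.Ici c))
    (hd : ∀ y, c < y → HasDerivAt f (f' y) y) {x : ℝ} (hx : c < x) :
    HasDerivAt (fun t => ∫ y in c..t, ((t - y : ℝ) : ℂ) ^ (b - 1) * f y)
      (((x - c : ℝ) : ℂ) ^ (b - 1) * f c + ∫ y in c..x, ((x - y : ℝ) : ℂ) ^ (b - 1) * f' y) x := by
  have hb0 : b ≠ 0 := fun h => by simp [h] at hb
  have hν : -1 < (b - 1).re := by rw [sub_re, one_re]; linarith
  set L : ℂ := ((x - c : ℝ) : ℂ)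
  set Q : ℝ → ℂ := fun t => ∫ s in (0:ℝ)..1, ((1 - s : ℝ) : ℂ) ^ (b - 1) * f (c + (t - c) * s)
  set R : ℂ → ℂ := fun ν => ∫ s in (0:ℝ)..1, ((1 - s : ℝ) : ℂ) ^ ν * f' (c + (x - c) * s)
  have hf'c : ContinuousOn (fun s : ℝ => f' (c + (x - c) * s)) (Set.uIcc 0 1) := by
    rw [Set.uIcc_of_le zero_le_one]; exact continuousOn_comp_affine hf' hx.le
  have hQ := hasDerivAt_integral_one_sub_cpow_mul_comp hν hf hf' hd hx
  have hpow : HasDerivAt (fun t : ℝ => ((t - c : ℝ) : ℂ) ^ b) (b * L ^ (b - 1)) x := by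
    simpa only [ofReal_one, one_mul, id] using
      ((hasDerivAt_id x).sub_const c).ofReal_cpow_const (sub_pos.2 hx) b
  have hscale : (fun t => ∫ y in c..t, ((t - y : ℝ) : ℂ) ^ (b - 1) * f y)
      =ᶠ[𝓝 x] fun t => ((t - c : ℝ) : ℂ) ^ b * Q t := by
    filter_upwards [Ioi_mem_nhds hx] with t ht
    rw [integral_sub_cpow_mul_eq ht, sub_add_cancel]
  refine ((hpow.mul hQ).congr_of_eventuallyEq hscale).congr_deriv ?_
  have hQ' : ∫ s in (0:ℝ)..1, ((1 - s : ℝ) : ℂ) ^ (b - 1) * (s * f' (c + (x - c) * s)) =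
      R (b - 1) - R b := by
    rw [← intervalIntegral.integral_sub
      ((intervalIntegrable_one_sub_cpow hν).mul_continuousOn hf'c)
      ((intervalIntegrable_one_sub_cpow (by linarith)).mul_continuousOn hf'c)]
    refine intervalIntegral.integral_congr fun s _ => ?_
    rw [← cpow_sub_one_mul_self hb0 ((1 - s : ℝ) : ℂ)]
    push_cast
    ring
  have hibp : b * Q x = f c + L * R b := mul_integral_one_sub_cpow_mul_comp hb hf hf' hd hx
  have hsub : ∫ y in c..x, ((x - y : ℝ) : ℂ) ^ (b - 1) * f' y = L ^ b * R (b - 1) := by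
    rw [integral_sub_cpow_mul_eq hx, sub_add_cancel]
  rw [hsub, hQ', ← cpow_sub_one_mul_self hb0 L]
  linear_combination L ^ (b - 1) * hibp

noncomputable def riemannLiouville (μ : ℂ) (c : ℝ) (f : ℝ → ℂ) (x : ℝ) : ℂ :=
  (1 / Gamma (-μ)) * ∫ y in c..x, ((x - y : ℝ) : ℂ) ^ (-μ - 1) * f y

theorem hasDerivAt_riemannLiouville (hμ : μ.re < 0)
    (hf : ContinuousOn f (Set.Ici c)) (hf' : ContinuousOn f' (Set.Ici c))
    (hd : ∀ y, c < y → HasDerivAt f (f' y) y) {x : ℝ} (hx : c < x) :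
    HasDerivAt (riemannLiouville μ c f)
      (riemannLiouville μ c f' x + ((x - c : ℝ) : ℂ) ^ (-μ - 1) / Gamma (-μ) * f c) x := by
  refine ((hasDerivAt_integral_sub_cpow_mul (b := -μ) (by simpa using hμ) hf hf' hd hx).const_mul
    (1 / Gamma (-μ))).congr_deriv ?_
  unfold riemannLiouville
  ring

theorem iteratedDeriv_riemannLiouville (hμ : μ.re < 0) {n : ℕ}
    (hf : ContDiffOn ℝ n f (Set.Ici c)) {x : ℝ} (hx : c < x) :
    iteratedDeriv n (riemannLiouville μ c f) x =
      riemannLiouville μ c (iteratedDerivWithin n f (Set.Ici c)) x +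
        ∑ k ∈ Icc 1 n, ((x - c : ℝ) : ℂ) ^ (-μ - (k : ℂ)) / Gamma (-μ - (k : ℂ) + 1) *
          iteratedDerivWithin (n - k) f (Set.Ici c) c := by
  induction n generalizing x with
  | zero => simp
  | succ n ih =>
    have hcont : ∀ m ≤ n + 1, ContinuousOn (iteratedDerivWithin m f (Set.Ici c)) (Set.Ici c) :=
      fun m hm => hf.continuousOn_iteratedDerivWithin (by exact_mod_cast hm) (uniqueDiffOn_Ici c)
    have hRL := hasDerivAt_riemannLiouville hμ (hcont n n.le_succ) (hcont (n + 1) le_rfl)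
      (fun y hy => hf.hasDerivAt_iteratedDerivWithin_Ici n.lt_succ_self hy) hx
    have hpow : ∀ k : ℕ, HasDerivAt
        (fun t : ℝ => ((t - c : ℝ) : ℂ) ^ (-μ - (k : ℂ)) / Gamma (-μ - (k : ℂ) + 1))
        (((x - c : ℝ) : ℂ) ^ (-μ - ((k + 1 : ℕ) : ℂ)) /
          Gamma (-μ - ((k + 1 : ℕ) : ℂ) + 1)) x := by
      intro k
      convert hasDerivAt_sub_cpow_div_Gamma (-μ - k) hx using 2 <;> push_cast <;> ring_nf
    have hsum := HasDerivAt.fun_sum (u := Icc 1 n) fun k _ =>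
      (hpow k).mul_const (iteratedDerivWithin (n - k) f (Set.Ici c) c)
    have hev : iteratedDeriv n (riemannLiouville μ c f) =ᶠ[𝓝 x] fun t =>
        riemannLiouville μ c (iteratedDerivWithin n f (Set.Ici c)) t +
          ∑ k ∈ Icc 1 n, ((t - c : ℝ) : ℂ) ^ (-μ - (k : ℂ)) / Gamma (-μ - (k : ℂ) + 1) *
            iteratedDerivWithin (n - k) f (Set.Ici c) c := by
      filter_upwards [Ioi_mem_nhds hx] with t ht using ih (hf.of_le (by norm_cast; omega)) ht
    rw [iteratedDeriv_succ, hev.deriv_eq, (hRL.fun_add hsum).deriv, sum_Icc_one_succ]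
    simp only [Nat.cast_one, sub_add_cancel, Nat.add_sub_cancel, Nat.add_sub_add_right]
    ring

end

theorem rl_deriv_composition_general (c : ℝ) (n : ℕ) (μ : ℂ) (hμ : μ.re < 0)
    (f : ℝ → ℂ) (hf : ContDiffOn ℝ n f (Set.Ici c)) (x : ℝ) (hx : c < x) :
    iteratedDeriv n
        (fun t : ℝ => (1 / Complex.Gamma (-μ)) *
          ∫ y in c..t, ((t - y : ℝ) : ℂ) ^ (-μ - 1) * f y) x =
      (1 / Complex.Gamma (-μ)) *
          (∫ y in c..x, ((x - y : ℝ) : ℂ) ^ (-μ - 1) *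
            iteratedDerivWithin n f (Set.Ici c) y) +
        ∑ k ∈ Finset.Icc 1 n,
          (((x - c : ℝ) : ℂ) ^ (-μ - (k : ℂ)) / Complex.Gamma (-μ - (k : ℂ) + 1)) *
            iteratedDerivWithin (n - k) f (Set.Ici c) c :=
  iteratedDeriv_riemannLiouville hμ hf hx

/-- Composition of an integer-order derivative with a Riemann–Liouville fractional
integral: `D_{c+}^n (D_{c+}^μ f)(x) = D_{c+}^μ (D_{c+}^n f)(x)
+ Σ_{k=1}^n ((x-c)^{-μ-k}/Γ(-μ-k+1)) f^{(n-k)}(c)` for `Re μ < 0`, `x > c`,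
and `f` n-times continuously differentiable on `[c, ∞)`. -/
theorem rl_deriv_composition (c : ℝ) (n : ℕ) (hn : 1 ≤ n) (μ : ℂ) (hμ : μ.re < 0)
    (f : ℝ → ℂ) (hf : ContDiffOn ℝ n f (Set.Ici c)) (x : ℝ) (hx : c < x) :
    iteratedDeriv n
        (fun t : ℝ => (1 / Complex.Gamma (-μ)) *
          ∫ y in c..t, ((t - y : ℝ) : ℂ) ^ (-μ - 1) * f y) x =
      (1 / Complex.Gamma (-μ)) *
          (∫ y in c..x, ((x - y : ℝ) : ℂ) ^ (-μ - 1) *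
            iteratedDerivWithin n f (Set.Ici c) y) +
        ∑ k ∈ Finset.Icc 1 n,
          (((x - c : ℝ) : ℂ) ^ (-μ - (k : ℂ)) / Complex.Gamma (-μ - (k : ℂ) + 1)) *
            iteratedDerivWithin (n - k) f (Set.Ici c) c :=
  rl_deriv_composition_general c n μ hμ f hf x hx
end

section
/- Let n ∈ ℕ with n ≥ 1, let ν ∈ ℂ with n − 1 < Re ν < n, and let f : ℝ → ℂ be a Schwartz function. Then for every x ∈ ℝ, the n-th iterated derivative at x of the function t ↦ (1/Γ(n−ν)) ∫_{−∞}^t (t−y)^{n−ν−1} f(y) dy equals (1/Γ(n−ν)) ∫_{−∞}^x (x−y)^{n−ν−1} f^{(n)}(y) dy. (That is, the Riemann–Liouville and Caputo fractional derivatives of order ν with basepoint −∞ coincide on Schwartz functions.) -/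
/-!
After the substitution `y = t - s` the fractional integral becomes `∫₀^∞ s^w f(t - s) ds` with
`w = n - ν - 1`, so `t` enters only through `f`. Since `Re w > -1` and a Schwartz function and its
derivatives decay faster than any power, `s^w f⁽ᵏ⁾(t - s)` is dominated, uniformly for `t` near
any `t₀`, by an integrable function of `s`. Differentiating under the integral `n` times therefore
moves all derivatives onto `f`.
-/

open MeasureTheory Complex SchwartzMap

open Set

theorem integrableOn_rpow_div_one_add_pow {a : ℝ} {k : ℕ} (ha : -1 < a) (hk : a + 1 < k) :
    IntegrableOn (fun s : ℝ => s ^ a / (1 + s) ^ k) (Ioi 0) := by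
  have hmeas : ∀ μ : Measure ℝ,
      AEStronglyMeasurable (fun s : ℝ => s ^ a / (1 + s) ^ k) μ := fun μ =>
    (by fun_prop : Measurable fun s : ℝ => s ^ a / (1 + s) ^ k).aestronglyMeasurable
  rw [← Ioc_union_Ioi_eq_Ioi zero_le_one]
  refine IntegrableOn.union ?_ ?_
  · have hint : IntegrableOn (fun s : ℝ => s ^ a) (Ioc 0 1) :=
      (intervalIntegrable_iff_integrableOn_Ioc_of_le zero_le_one).1
        (intervalIntegral.intervalIntegrable_rpow' ha)
    refine hint.mono' (hmeas _) ((ae_restrict_iff' measurableSet_Ioc).2 (.of_forall ?_))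
    intro s ⟨hs0, _⟩
    rw [Real.norm_eq_abs, abs_of_nonneg (by positivity)]
    exact div_le_self (Real.rpow_nonneg hs0.le _) (one_le_pow₀ (by linarith))
  · have hint : IntegrableOn (fun s : ℝ => s ^ (a - k)) (Ioi 1) :=
      integrableOn_Ioi_rpow_of_lt (by linarith) zero_lt_one
    refine hint.mono' (hmeas _) ((ae_restrict_iff' measurableSet_Ioi).2 (.of_forall ?_))
    intro s (hs : 1 < s)
    have hs0 : 0 < s := zero_lt_one.trans hs
    rw [Real.norm_eq_abs, abs_of_nonneg (by positivity), Real.rpow_sub hs0, Real.rpow_natCast]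
    exact div_le_div_of_nonneg_left (by positivity) (by positivity)
      (pow_le_pow_left₀ hs0.le (by linarith) k)

theorem one_add_abs_le_mul_one_add_abs_sub (s t : ℝ) : 1 + |s| ≤ (1 + |t|) * (1 + |t - s|) := by
  have : |s| ≤ |t| + |t - s| := by simpa using abs_sub t (t - s)
  nlinarith [mul_nonneg (abs_nonneg t) (abs_nonneg (t - s))]

theorem SchwartzMap.exists_one_add_abs_pow_mul_norm_le (g : 𝓢(ℝ, ℂ)) (k : ℕ) :
    ∃ C, ∀ x : ℝ, (1 + |x|) ^ k * ‖g x‖ ≤ C :=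
  ⟨_, fun x => by
    simpa using g.one_add_le_sup_seminorm_apply (𝕜 := ℝ) (m := (k, 0)) le_rfl le_rfl x⟩

theorem exists_integrableOn_bound_cpow_mul_comp_sub {w : ℂ} (hw : -1 < w.re) (g : 𝓢(ℝ, ℂ))
    (t₀ : ℝ) : ∃ B : ℝ → ℝ, IntegrableOn B (Ioi 0) ∧
      ∀ s ∈ Ioi (0 : ℝ), ∀ t ∈ Metric.ball t₀ 1, ‖(s : ℂ) ^ w * g (t - s)‖ ≤ B s := by
  set k := ⌊w.re⌋₊ + 2
  have hk : w.re + 1 < k := by push_cast [k]; linarith [Nat.lt_floor_add_one w.re]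
  obtain ⟨C, hC⟩ := g.exists_one_add_abs_pow_mul_norm_le k
  refine ⟨fun s => (2 + |t₀|) ^ k * C * (s ^ w.re / (1 + s) ^ k),
    (integrableOn_rpow_div_one_add_pow hw hk).const_mul _, fun s (hs : 0 < s) t ht => ?_⟩
  have ht_le : 1 + |t| ≤ 2 + |t₀| := by
    have := abs_sub_abs_le_abs_sub t t₀
    rw [Metric.mem_ball, Real.dist_eq] at ht
    linarith
  -- Peetre's inequality turns decay of `g` at `t - s` into decay in `s`, uniformly in `t`.
  have hdecay : ‖g (t - s)‖ ≤ (2 + |t₀|) ^ k * C / (1 + s) ^ k := by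
    rw [le_div_iff₀ (by positivity)]
    calc ‖g (t - s)‖ * (1 + s) ^ k ≤ ((1 + |t|) * (1 + |t - s|)) ^ k * ‖g (t - s)‖ := by
          rw [mul_comm]
          gcongr
          simpa [abs_of_pos hs] using one_add_abs_le_mul_one_add_abs_sub s t
      _ = (1 + |t|) ^ k * ((1 + |t - s|) ^ k * ‖g (t - s)‖) := by rw [mul_pow, mul_assoc]
      _ ≤ (2 + |t₀|) ^ k * C := by gcongr; exact hC (t - s)
  calc ‖(s : ℂ) ^ w * g (t - s)‖ = s ^ w.re * ‖g (t - s)‖ := by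
        rw [norm_mul, norm_cpow_eq_rpow_re_of_pos hs]
    _ ≤ s ^ w.re * ((2 + |t₀|) ^ k * C / (1 + s) ^ k) := by gcongr
    _ = (2 + |t₀|) ^ k * C * (s ^ w.re / (1 + s) ^ k) := by ring

theorem hasDerivAt_integral_cpow_mul_comp_sub {w : ℂ} (hw : -1 < w.re) (g : 𝓢(ℝ, ℂ)) (t₀ : ℝ) :
    HasDerivAt (fun t : ℝ => ∫ s in Ioi (0 : ℝ), (s : ℂ) ^ w * g (t - s))
      (∫ s in Ioi (0 : ℝ), (s : ℂ) ^ w * deriv g (t₀ - s)) t₀ := by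
  have hmeas : ∀ (h : 𝓢(ℝ, ℂ)) (t : ℝ) (μ : Measure ℝ),
      AEStronglyMeasurable (fun s : ℝ => (s : ℂ) ^ w * h (t - s)) μ := fun h t μ =>
    have := h.continuous.measurable
    (by fun_prop : Measurable fun s : ℝ => (s : ℂ) ^ w * h (t - s)).aestronglyMeasurable
  obtain ⟨B, hB_int, hB⟩ := exists_integrableOn_bound_cpow_mul_comp_sub hw g t₀
  obtain ⟨B', hB'_int, hB'⟩ := exists_integrableOn_bound_cpow_mul_comp_sub hw (derivCLM ℝ ℂ g) t₀
  refine (hasDerivAt_integral_of_dominated_loc_of_deriv_le (Metric.ball_mem_nhds t₀ one_pos)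
    (.of_forall fun t => hmeas g t _) ?_ (hmeas (derivCLM ℝ ℂ g) t₀ _)
    ((ae_restrict_iff' measurableSet_Ioi).2 (.of_forall hB')) hB'_int
    ((ae_restrict_iff' measurableSet_Ioi).2 (.of_forall fun s _ t _ => ?_))).2
  · exact hB_int.mono' (hmeas g t₀ _) ((ae_restrict_iff' measurableSet_Ioi).2
      (.of_forall fun s hs => hB s hs t₀ (Metric.mem_ball_self one_pos)))
  · exact ((g.hasDerivAt (t - s)).comp_sub_const t s).const_mul _

noncomputable def liouvilleIntegral (w : ℂ) (g : ℝ → ℂ) (t : ℝ) : ℂ :=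
  ∫ y in Iic t, ((t - y : ℝ) : ℂ) ^ w * g y

theorem liouvilleIntegral_eq_integral_Ioi (w : ℂ) (g : ℝ → ℂ) (t : ℝ) :
    liouvilleIntegral w g t = ∫ s in Ioi (0 : ℝ), (s : ℂ) ^ w * g (t - s) := by
  rw [liouvilleIntegral, integral_Iic_eq_integral_Iio,
    ← (Measure.measurePreserving_sub_left volume t).setIntegral_preimage_emb
      (MeasurableEquiv.subLeft t).measurableEmbedding]
  simp [sub_sub_cancel]

theorem hasDerivAt_liouvilleIntegral {w : ℂ} (hw : -1 < w.re) (g : 𝓢(ℝ, ℂ)) (t : ℝ) :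
    HasDerivAt (liouvilleIntegral w g) (liouvilleIntegral w (deriv g) t) t := by
  simpa only [funext (liouvilleIntegral_eq_integral_Ioi w _)] using
    hasDerivAt_integral_cpow_mul_comp_sub hw g t

theorem iteratedDeriv_liouvilleIntegral {w : ℂ} (hw : -1 < w.re) (m : ℕ) (g : 𝓢(ℝ, ℂ)) :
    iteratedDeriv m (liouvilleIntegral w g) = liouvilleIntegral w (iteratedDeriv m g) := by
  induction m generalizing g with
  | zero => simp
  | succ m ih =>
    have hderiv : deriv (liouvilleIntegral w g) = liouvilleIntegral w (derivCLM ℝ ℂ g) :=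
      funext fun t => (hasDerivAt_liouvilleIntegral hw g t).deriv
    rw [iteratedDeriv_succ', hderiv, ih, iteratedDeriv_succ']
    rfl

theorem rl_eq_caputo_schwartz_general (n : ℕ) (ν : ℂ)
    (hν₂ : ν.re < n) (f : SchwartzMap ℝ ℂ) (x : ℝ) :
    iteratedDeriv n
        (fun t : ℝ => (1 / Complex.Gamma ((n : ℂ) - ν)) *
          ∫ y in Set.Iic t, ((t - y : ℝ) : ℂ) ^ ((n : ℂ) - ν - 1) * f y) x =
      (1 / Complex.Gamma ((n : ℂ) - ν)) *
        ∫ y in Set.Iic x, ((x - y : ℝ) : ℂ) ^ ((n : ℂ) - ν - 1) *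
          iteratedDeriv n (⇑f) y := by
  have hw : -1 < ((n : ℂ) - ν - 1).re := by
    simp only [sub_re, natCast_re, one_re]; linarith
  change iteratedDeriv n ((1 / Gamma (n - ν)) • liouvilleIntegral (n - ν - 1) f) x = _
  rw [iteratedDeriv_const_smul_field, iteratedDeriv_liouvilleIntegral hw]
  rfl

/-- The Riemann–Liouville and Caputo fractional derivatives of order `ν`
(with `n - 1 < Re ν < n`) with basepoint `-∞` coincide on Schwartz functions. -/
theorem rl_eq_caputo_schwartz (n : ℕ) (hn : 1 ≤ n) (ν : ℂ)
    (hν₁ : (n : ℝ) - 1 < ν.re) (hν₂ : ν.re < n) (f : SchwartzMap ℝ ℂ) (x : ℝ) :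
    iteratedDeriv n
        (fun t : ℝ => (1 / Complex.Gamma ((n : ℂ) - ν)) *
          ∫ y in Set.Iic t, ((t - y : ℝ) : ℂ) ^ ((n : ℂ) - ν - 1) * f y) x =
      (1 / Complex.Gamma ((n : ℂ) - ν)) *
        ∫ y in Set.Iic x, ((x - y : ℝ) : ℂ) ^ ((n : ℂ) - ν - 1) *
          iteratedDeriv n (⇑f) y :=
  rl_eq_caputo_schwartz_general n ν hν₂ f x
end

section
/- Let ν ∈ ℂ with Re ν < 0 and let f, g : ℝ → ℂ be Schwartz functions. Then for every x ∈ ℝ, ∫_ℝ (D_+^ν f)(x − t) · g(t) dt = ∫_ℝ f(x − t) · (D_+^ν g)(t) dt; that is, (D_+^ν f) ∗ g = f ∗ (D_+^ν g). -/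
/-!
Substituting `y = u - s` writes `D_+^ν h = Γ(-ν)⁻¹ (ρ ⋆ h)` with the one-sided kernel
`ρ s = s ^ (-ν - 1)` on `s > 0`. By Fubini both sides of the identity become
`Γ(-ν)⁻¹ ∫_{s > 0} ρ s (f ⋆ g)(x - s) ds`, the right-hand side after also using `g ⋆ f = f ⋆ g`.
Fubini applies because `|ρ s| (1 + |s|)⁻ᵏ` is integrable once `k > 1 - Re ν`, while Peetre's
inequality `1 + ‖a‖ ≤ (1 + ‖a - b‖)(1 + ‖b‖)` shows that `|f| ⋆ |g|` decays faster than any power.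
-/

open MeasureTheory Complex SchwartzMap

lemma inv_one_add_norm_sub_pow_le {E : Type*} [SeminormedAddCommGroup E] (a b : E) (k : ℕ) :
    ((1 + ‖a - b‖) ^ k)⁻¹ ≤ (1 + ‖b‖) ^ k * ((1 + ‖a‖) ^ k)⁻¹ := by
  have peetre : 1 + ‖a‖ ≤ (1 + ‖a - b‖) * (1 + ‖b‖) := by
    nlinarith [norm_le_norm_add_norm_sub' a b, norm_nonneg (a - b), norm_nonneg b]
  calc ((1 + ‖a - b‖) ^ k)⁻¹ = (1 + ‖b‖) ^ k * (((1 + ‖a - b‖) * (1 + ‖b‖)) ^ k)⁻¹ := by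
        rw [mul_pow, mul_inv, mul_left_comm, mul_inv_cancel₀ (by positivity), mul_one]
    _ ≤ (1 + ‖b‖) ^ k * ((1 + ‖a‖) ^ k)⁻¹ := by gcongr

namespace SchwartzMap

variable {E F G : Type*} [NormedAddCommGroup E] [NormedSpace ℝ E]
  [NormedAddCommGroup F] [NormedSpace ℝ F] [NormedAddCommGroup G] [NormedSpace ℝ G]

lemma exists_norm_le_inv_one_add_norm_pow (f : 𝓢(E, F)) (k : ℕ) :
    ∃ C, 0 ≤ C ∧ ∀ u, ‖f u‖ ≤ C * ((1 + ‖u‖) ^ k)⁻¹ := by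
  refine ⟨2 ^ k * (Finset.Iic (k, 0)).sup (fun m => SchwartzMap.seminorm ℝ m.1 m.2) f,
    by positivity, fun u => ?_⟩
  have h := one_add_le_sup_seminorm_apply (𝕜 := ℝ) (m := (k, 0)) le_rfl le_rfl f u
  rw [norm_iteratedFDeriv_zero] at h
  rwa [← div_eq_mul_inv, le_div_iff₀' (by positivity)]

variable [MeasurableSpace E] [BorelSpace E] [SecondCountableTopology E]
  {μ : Measure E} [μ.HasTemperateGrowth]

lemma integrable_one_add_norm_pow_mul (g : 𝓢(E, F)) (k : ℕ) :
    Integrable (fun t => (1 + ‖t‖) ^ k * ‖g t‖) μ := by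
  refine (((g.integrable_pow_mul μ 0).add (g.integrable_pow_mul μ k)).const_mul
    (2 ^ (k - 1))).mono' (by fun_prop) (Filter.Eventually.of_forall fun t => ?_)
  rw [Real.norm_of_nonneg (by positivity), Pi.add_apply, pow_zero, one_mul, ← one_add_mul,
    ← mul_assoc]
  gcongr
  simpa using add_pow_le zero_le_one (norm_nonneg t) k

lemma exists_integral_norm_mul_le (f : 𝓢(E, F)) (g : 𝓢(E, G)) (k : ℕ) :
    ∃ C, 0 ≤ C ∧ ∀ u, ∫ t, ‖f (u - t)‖ * ‖g t‖ ∂μ ≤ C * ((1 + ‖u‖) ^ k)⁻¹ := by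
  obtain ⟨C, hC, hf⟩ := f.exists_norm_le_inv_one_add_norm_pow k
  refine ⟨C * ∫ t, (1 + ‖t‖) ^ k * ‖g t‖ ∂μ,
    mul_nonneg hC (integral_nonneg fun t => by positivity), fun u => ?_⟩
  have bound (t : E) : ‖f (u - t)‖ * ‖g t‖
      ≤ C * ((1 + ‖u‖) ^ k)⁻¹ * ((1 + ‖t‖) ^ k * ‖g t‖) :=
    calc ‖f (u - t)‖ * ‖g t‖ ≤ C * ((1 + ‖u - t‖) ^ k)⁻¹ * ‖g t‖ := by gcongr; exact hf _
      _ ≤ C * ((1 + ‖t‖) ^ k * ((1 + ‖u‖) ^ k)⁻¹) * ‖g t‖ := by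
          gcongr; exact inv_one_add_norm_sub_pow_le u t k
      _ = _ := by ring
  calc ∫ t, ‖f (u - t)‖ * ‖g t‖ ∂μ
      ≤ ∫ t, C * ((1 + ‖u‖) ^ k)⁻¹ * ((1 + ‖t‖) ^ k * ‖g t‖) ∂μ :=
        integral_mono_of_nonneg (Filter.Eventually.of_forall fun t => by positivity)
          ((g.integrable_one_add_norm_pow_mul k).const_mul _) (Filter.Eventually.of_forall bound)
    _ = _ := by rw [integral_const_mul]; ring

end SchwartzMap

section KernelConvolution

variable {E : Type*} [NormedAddCommGroup E] [NormedSpace ℝ E] [MeasurableSpace E] [BorelSpace E]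
  [SecondCountableTopology E] {μ ν : Measure E} [SFinite μ] [SFinite ν] [ν.HasTemperateGrowth]
  {K : E → ℂ} {k : ℕ}

theorem integral_integral_kernel_mul_swap (hK : AEStronglyMeasurable K μ)
    (hKk : Integrable (fun s => ‖K s‖ * ((1 + ‖s‖) ^ k)⁻¹) μ) (f g : 𝓢(E, ℂ)) (x : E) :
    ∫ t, (∫ s, K s * f (x - t - s) ∂μ) * g t ∂ν = ∫ s, K s * ∫ t, f (x - s - t) * g t ∂ν ∂μ := by
  set F : E × E → ℂ := fun p => K p.1 * (f (x - p.2 - p.1) * g p.2)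
  have hF_meas : AEStronglyMeasurable F (μ.prod ν) :=
    hK.comp_fst.mul
      (by fun_prop : Continuous fun p : E × E => f (x - p.2 - p.1) * g p.2).aestronglyMeasurable
  have hF : Integrable F (μ.prod ν) := by
    obtain ⟨C, hC, hfg⟩ := f.exists_integral_norm_mul_le g k (μ := ν)
    refine (integrable_prod_iff hF_meas).2 ⟨Filter.Eventually.of_forall fun s => ?_, ?_⟩
    · exact ((g.integrable (μ := ν)).bdd_mul (by fun_prop)
        (Filter.Eventually.of_forall fun t => f.norm_le_seminorm ℝ (x - t - s))).const_mul (K s)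
    refine (hKk.const_mul (C * (1 + ‖x‖) ^ k)).mono' hF_meas.norm.integral_prod_right'
      (Filter.Eventually.of_forall fun s => ?_)
    rw [Real.norm_of_nonneg (integral_nonneg fun _ => norm_nonneg _)]
    calc ∫ t, ‖F (s, t)‖ ∂ν = ‖K s‖ * ∫ t, ‖f (x - s - t)‖ * ‖g t‖ ∂ν := by
          simp only [F, norm_mul, sub_right_comm, integral_const_mul]
      _ ≤ ‖K s‖ * (C * ((1 + ‖x - s‖) ^ k)⁻¹) := by gcongr; exact hfg _
      _ ≤ ‖K s‖ * (C * ((1 + ‖x‖) ^ k * ((1 + ‖s‖) ^ k)⁻¹)) := by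
          gcongr; simpa only [norm_sub_rev] using inv_one_add_norm_sub_pow_le s x k
      _ = _ := by ring
  calc ∫ t, (∫ s, K s * f (x - t - s) ∂μ) * g t ∂ν = ∫ t, ∫ s, F (s, t) ∂μ ∂ν := by
        simp only [F, ← integral_mul_const, mul_assoc]
    _ = ∫ s, ∫ t, F (s, t) ∂ν ∂μ := (integral_integral_swap (f := fun s t => F (s, t)) hF).symm
    _ = _ := by simp only [F, integral_const_mul, sub_right_comm]

theorem integral_integral_kernel_mul_comm [ν.IsAddLeftInvariant] [ν.IsNegInvariant]
    (hK : AEStronglyMeasurable K μ) (hKk : Integrable (fun s => ‖K s‖ * ((1 + ‖s‖) ^ k)⁻¹) μ)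
    (f g : 𝓢(E, ℂ)) (x : E) :
    ∫ t, (∫ s, K s * f (x - t - s) ∂μ) * g t ∂ν = ∫ t, f (x - t) * ∫ s, K s * g (t - s) ∂μ ∂ν := by
  have conv_comm (u : E) : ∫ t, g (u - t) * f t ∂ν = ∫ t, f (u - t) * g t ∂ν := by
    rw [← integral_sub_left_eq_self _ ν u]
    simp only [sub_sub_cancel, mul_comm]
  calc ∫ t, (∫ s, K s * f (x - t - s) ∂μ) * g t ∂ν
      = ∫ s, K s * ∫ t, f (x - s - t) * g t ∂ν ∂μ := integral_integral_kernel_mul_swap hK hKk f g x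
    _ = ∫ s, K s * ∫ t, g (x - s - t) * f t ∂ν ∂μ := by simp only [conv_comm]
    _ = ∫ t, (∫ s, K s * g (x - t - s) ∂μ) * f t ∂ν :=
        (integral_integral_kernel_mul_swap hK hKk g f x).symm
    _ = _ := by
        rw [← integral_sub_left_eq_self _ ν x]
        simp only [sub_sub_cancel, mul_comm]

end KernelConvolution

lemma setIntegral_Iic_eq_setIntegral_Ioi_sub {F : Type*} [NormedAddCommGroup F] [NormedSpace ℝ F]
    (φ : ℝ → F) (u : ℝ) : ∫ y in Set.Iic u, φ y = ∫ s in Set.Ioi 0, φ (u - s) := by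
  have hsub : (fun s : ℝ => u - s) ⁻¹' Set.Iic u = Set.Ici 0 := by ext s; simp
  have hemb : MeasurableEmbedding (fun s : ℝ => u - s) :=
    (MeasurableEquiv.subLeft u).measurableEmbedding
  rw [← integral_Ici_eq_integral_Ioi, ← hsub, ← hemb.setIntegral_map,
    Measure.map_sub_left_eq_self]

lemma integrableOn_norm_cpow_mul_inv_one_add_norm_pow {w : ℂ} {k : ℕ} (hw : -1 < w.re)
    (hk : w.re + 1 < k) :
    IntegrableOn (fun s : ℝ => ‖(s : ℂ) ^ w‖ * ((1 + ‖s‖) ^ k)⁻¹) (Set.Ioi 0) := by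
  have hmeas : AEStronglyMeasurable (fun s : ℝ => s ^ w.re * ((1 + s) ^ k)⁻¹) := by fun_prop
  have near_zero : IntegrableOn (fun s : ℝ => s ^ w.re * ((1 + s) ^ k)⁻¹) (Set.Ioc 0 1) := by
    refine (((intervalIntegral.integrableOn_Ioo_rpow_iff two_pos).2 hw).mono_set
      fun s hs => ⟨hs.1, hs.2.trans_lt one_lt_two⟩).mono' hmeas.restrict ?_
    filter_upwards [ae_restrict_mem measurableSet_Ioc] with s ⟨hs0, _⟩
    rw [Real.norm_of_nonneg (by positivity)]
    exact mul_le_of_le_one_right (by positivity)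
      (inv_le_one_of_one_le₀ (one_le_pow₀ (by linarith)))
  have near_top : IntegrableOn (fun s : ℝ => s ^ w.re * ((1 + s) ^ k)⁻¹) (Set.Ioi 1) := by
    refine (integrableOn_Ioi_rpow_of_lt (by linarith : w.re - k < -1) one_pos).mono'
      hmeas.restrict ?_
    filter_upwards [ae_restrict_mem measurableSet_Ioi] with s hs
    have hs0 : (0 : ℝ) < s := one_pos.trans hs
    rw [Real.norm_of_nonneg (by positivity), Real.rpow_sub hs0, Real.rpow_natCast, div_eq_mul_inv]
    gcongr
    linarith
  have h := near_zero.union near_top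
  rw [Set.Ioc_union_Ioi_eq_Ioi zero_le_one] at h
  refine h.congr_fun (fun s hs => ?_) measurableSet_Ioi
  rw [norm_cpow_eq_rpow_re_of_pos hs, Real.norm_of_nonneg hs.le]

/-- The Riemann–Liouville fractional integral with basepoint `-∞` of order `ν`
(`Re ν < 0`) commutes with convolution of Schwartz functions:
`(D_+^ν f) ∗ g = f ∗ (D_+^ν g)`. -/
theorem rl_integral_convolution (ν : ℂ) (hν : ν.re < 0)
    (f g : SchwartzMap ℝ ℂ)
    (D : (ℝ → ℂ) → (ℝ → ℂ))
    (hD : D = fun h : ℝ → ℂ => fun u : ℝ =>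
      (1 / Complex.Gamma (-ν)) *
        ∫ y in Set.Iic u, ((u - y : ℝ) : ℂ) ^ (-ν - 1) * h y) :
    ∀ x : ℝ, ∫ t : ℝ, D (⇑f) (x - t) * g t = ∫ t : ℝ, f (x - t) * D (⇑g) t := by
  intro x
  have hw : -1 < (-ν - 1).re := by rw [sub_re, neg_re, one_re]; linarith
  obtain ⟨k, hk⟩ := exists_nat_gt ((-ν - 1).re + 1)
  have hD_Ioi (h : ℝ → ℂ) (u : ℝ) :
      D h u = 1 / Gamma (-ν) * ∫ s in Set.Ioi (0 : ℝ), (s : ℂ) ^ (-ν - 1) * h (u - s) := by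
    subst hD
    simp only [setIntegral_Iic_eq_setIntegral_Ioi_sub, sub_sub_cancel]
  simp only [hD_Ioi, mul_assoc, mul_left_comm (f _), integral_const_mul]
  congr 1
  exact integral_integral_kernel_mul_comm
    (measurable_ofReal.pow_const _).aestronglyMeasurable
    (integrableOn_norm_cpow_mul_inv_one_add_norm_pow hw hk) f g x
end

section
/- Let n ≥ 1, let A be a finite nonempty set of multi-indices α : Fin n → ℝ with all components α_i ≥ 0, let ν > 0 be such that Σ_i α_i = ν for every α ∈ A, and let c : A → ℂ. Define σ : (Fin n → ℝ) → ℂ by σ(λ) = Σ_{α ∈ A} c_α · ∏_i (λ_i)^{α_i}, where each power (λ_i)^{α_i} is the principal complex power Complex.cpow of the complex coercion of λ_i. If σ(λ) ≠ 0 for every λ ≠ 0, then there exists a constant C > 0 such that |σ(λ)| ≥ C · ‖λ‖^ν for all λ ∈ ℝ^n (Euclidean norm). -/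
/-!
A fractional symbol whose multi-indices all have length `ν` is positively homogeneous of degree
`ν`: `σ (t • ξ) = t ^ ν * σ ξ` for `t > 0`, because `(t ξᵢ) ^ αᵢ = t ^ αᵢ ξᵢ ^ αᵢ` for the
principal branch when `t > 0`. It is continuous because all exponents are nonnegative. Its norm
therefore attains a minimum `C` on the compact unit sphere, positive by ellipticity, and scaling
any `ξ ≠ 0` to `ξ / ‖ξ‖` gives `‖σ ξ‖ ≥ C ‖ξ‖ ^ ν`.
-/

open Finset Metric

theorem Complex.ofReal_mul_cpow_of_pos {t : ℝ} (ht : 0 < t) (z a : ℂ) :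
    ((t : ℂ) * z) ^ a = (t : ℂ) ^ a * z ^ a := by
  rcases eq_or_ne z 0 with rfl | hz
  · rcases eq_or_ne a 0 with rfl | ha
    · simp
    · simp [Complex.zero_cpow ha]
  have ht' : (t : ℂ) ≠ 0 := Complex.ofReal_ne_zero.2 ht.ne'
  rw [Complex.cpow_def_of_ne_zero (mul_ne_zero ht' hz), Complex.cpow_def_of_ne_zero ht',
    Complex.cpow_def_of_ne_zero hz, Complex.log_ofReal_mul ht hz, Complex.ofReal_log ht.le,
    add_mul, Complex.exp_add]

theorem Complex.continuous_ofReal_cpow_ofReal {a : ℝ} (ha : 0 ≤ a) :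
    Continuous fun x : ℝ => (x : ℂ) ^ (a : ℂ) := by
  rcases ha.eq_or_lt with rfl | ha
  · simpa using continuous_const
  · exact Complex.continuous_ofReal_cpow_const (by simpa using ha)

theorem exists_pos_mul_rpow_norm_le_norm_of_homogeneous
    {E F : Type*} [NormedAddCommGroup E] [NormedSpace ℝ E] [FiniteDimensional ℝ E]
    [NormedAddCommGroup F] {f : E → F} {ν : ℝ} (hν : ν ≠ 0)
    (hf : ContinuousOn f (sphere 0 1))
    (hhom : ∀ t : ℝ, 0 < t → ∀ x, ‖f (t • x)‖ = t ^ ν * ‖f x‖)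
    (hne : ∀ x, x ≠ 0 → f x ≠ 0) :
    ∃ C, 0 < C ∧ ∀ x, C * ‖x‖ ^ ν ≤ ‖f x‖ := by
  rcases subsingleton_or_nontrivial E with hE | hE
  · exact ⟨1, one_pos, fun x => by simp [Subsingleton.elim x 0, Real.zero_rpow hν]⟩
  obtain ⟨u, hu, hmin⟩ := (isCompact_sphere (0 : E) 1).exists_isMinOn
    (NormedSpace.sphere_nonempty.2 zero_le_one) hf.norm
  have hu0 : u ≠ 0 := ne_zero_of_mem_unit_sphere ⟨u, hu⟩
  refine ⟨‖f u‖, norm_pos_iff.2 (hne u hu0), fun x => ?_⟩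
  rcases eq_or_ne x 0 with rfl | hx
  · simp [Real.zero_rpow hν]
  have hx' : 0 < ‖x‖ := norm_pos_iff.2 hx
  have hunit : ‖x‖⁻¹ • x ∈ sphere (0 : E) 1 := by simp [norm_smul, hx'.ne']
  calc ‖f u‖ * ‖x‖ ^ ν ≤ ‖f (‖x‖⁻¹ • x)‖ * ‖x‖ ^ ν := by gcongr; exact hmin hunit
    _ = ‖f x‖ := by rw [mul_comm, ← hhom _ hx', smul_inv_smul₀ hx'.ne']

section FractionalSymbol

variable {ι : Type*} [Fintype ι]

noncomputable def fractionalMonomial (α ξ : ι → ℝ) : ℂ :=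
  ∏ i, (ξ i : ℂ) ^ (α i : ℂ)

noncomputable def fractionalSymbol (A : Finset (ι → ℝ)) (c : (ι → ℝ) → ℂ) (ξ : ι → ℝ) : ℂ :=
  ∑ α ∈ A, c α * fractionalMonomial α ξ

theorem fractionalMonomial_smul (α ξ : ι → ℝ) {t : ℝ} (ht : 0 < t) :
    fractionalMonomial α (t • ξ) = ((t ^ ∑ i, α i : ℝ) : ℂ) * fractionalMonomial α ξ := by
  simp only [fractionalMonomial, Pi.smul_apply, smul_eq_mul, Complex.ofReal_mul,
    Complex.ofReal_mul_cpow_of_pos ht, prod_mul_distrib, Real.rpow_sum_of_pos ht,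
    Complex.ofReal_prod, Complex.ofReal_cpow ht.le]

theorem continuous_fractionalMonomial {α : ι → ℝ} (hα : ∀ i, 0 ≤ α i) :
    Continuous (fractionalMonomial α) :=
  continuous_finsetProd _ fun i _ =>
    (Complex.continuous_ofReal_cpow_ofReal (hα i)).comp (continuous_apply i)

theorem fractionalSymbol_smul {A : Finset (ι → ℝ)} {ν : ℝ} (hhom : ∀ α ∈ A, ∑ i, α i = ν)
    (c : (ι → ℝ) → ℂ) (ξ : ι → ℝ) {t : ℝ} (ht : 0 < t) :
    fractionalSymbol A c (t • ξ) = ((t ^ ν : ℝ) : ℂ) * fractionalSymbol A c ξ := by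
  rw [fractionalSymbol, fractionalSymbol, mul_sum]
  refine sum_congr rfl fun α hα => ?_
  rw [fractionalMonomial_smul α ξ ht, hhom α hα, mul_left_comm]

theorem continuous_fractionalSymbol {A : Finset (ι → ℝ)} (hA : ∀ α ∈ A, ∀ i, 0 ≤ α i)
    (c : (ι → ℝ) → ℂ) : Continuous (fractionalSymbol A c) :=
  continuous_finsetSum _ fun α hα =>
    continuous_const.mul (continuous_fractionalMonomial (hA α hα))

end FractionalSymbol

theorem elliptic_symbol_lower_bound_general (n : ℕ)
    (A : Finset (Fin n → ℝ))
    (hnonneg : ∀ α ∈ A, ∀ i, 0 ≤ α i)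
    (ν : ℝ) (hνpos : 0 < ν) (hhom : ∀ α ∈ A, ∑ i, α i = ν)
    (c : (Fin n → ℝ) → ℂ)
    (σ : EuclideanSpace ℝ (Fin n) → ℂ)
    (hσ : ∀ ξ : EuclideanSpace ℝ (Fin n),
      σ ξ = ∑ α ∈ A, c α * ∏ i, ((ξ i : ℂ)) ^ ((α i : ℂ)))
    (hell : ∀ ξ : EuclideanSpace ℝ (Fin n), ξ ≠ 0 → σ ξ ≠ 0) :
    ∃ C : ℝ, 0 < C ∧ ∀ ξ : EuclideanSpace ℝ (Fin n), C * ‖ξ‖ ^ ν ≤ ‖σ ξ‖ := by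
  obtain rfl : σ = fun ξ => fractionalSymbol A c ξ.ofLp := funext hσ
  refine exists_pos_mul_rpow_norm_le_norm_of_homogeneous hνpos.ne' ?_ ?_ hell
  · exact ((continuous_fractionalSymbol hnonneg c).comp (PiLp.continuous_ofLp 2 _)).continuousOn
  · intro t ht ξ
    dsimp only
    rw [WithLp.ofLp_smul, fractionalSymbol_smul hhom c _ ht, norm_mul, Complex.norm_real,
      Real.norm_of_nonneg (Real.rpow_nonneg ht.le ν)]

/-- A homogeneous elliptic fractional symbol of degree `ν > 0` is bounded below
by a positive constant multiple of `‖λ‖^ν`. -/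
theorem elliptic_symbol_lower_bound (n : ℕ) (hn : 1 ≤ n)
    (A : Finset (Fin n → ℝ)) (hA : A.Nonempty)
    (hnonneg : ∀ α ∈ A, ∀ i, 0 ≤ α i)
    (ν : ℝ) (hνpos : 0 < ν) (hhom : ∀ α ∈ A, ∑ i, α i = ν)
    (c : (Fin n → ℝ) → ℂ)
    (σ : EuclideanSpace ℝ (Fin n) → ℂ)
    (hσ : ∀ ξ : EuclideanSpace ℝ (Fin n),
      σ ξ = ∑ α ∈ A, c α * ∏ i, ((ξ i : ℂ)) ^ ((α i : ℂ)))
    (hell : ∀ ξ : EuclideanSpace ℝ (Fin n), ξ ≠ 0 → σ ξ ≠ 0) :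
    ∃ C : ℝ, 0 < C ∧ ∀ ξ : EuclideanSpace ℝ (Fin n), C * ‖ξ‖ ^ ν ≤ ‖σ ξ‖ :=
  elliptic_symbol_lower_bound_general n A hnonneg ν hνpos hhom c σ hσ hell
end

section
/- Let A be a finite nonempty set of nonnegative real numbers, let c : A → ℂ, let ν := max A, and assume c_ν ≠ 0. Define P : ℝ → ℂ by P(λ) = Σ_{a ∈ A} c_a · λ^a for λ > 0, where λ^a is the real power (rpow) coerced to ℂ. Then for every k ∈ ℕ there exist constants C > 0 and R > 0 such that for all real λ > R, P(λ) ≠ 0 and the k-th iterated derivative of the function λ ↦ (P(λ))⁻¹ satisfies |(d/dλ)^k (P⁻¹)(λ)| ≤ C · λ^{−ν−k}. -/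
/-!
Since `P(λ) = λ^ν (c_ν + o(1))`, the reciprocal `1/P` is `O(λ^{-ν})`. Call `λ^e P(λ)^{-n}` a
monomial of order `e - nν`; finite sums of monomials of order `≤ μ` are then `O(λ^μ)`.
Differentiating a monomial gives `e λ^{e-1} P^{-n} - n λ^e P' P^{-n-1}`, and `P'` is a sum of
`c_a a λ^{a-1}` with `a ≤ ν`, so differentiation lowers the order by one. As `1/P` has
order `-ν`, its `k`-th derivative agrees near infinity with a sum of order `-ν - k`.
-/

open Finset Filter Asymptotics Topology

theorem isBigO_rpow_rpow_atTop_of_le {a b : ℝ} (h : a ≤ b) :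
    (fun x : ℝ => x ^ a) =O[atTop] fun x => x ^ b :=
  IsBigO.of_bound 1 <| (eventually_ge_atTop 1).mono fun x hx => by
    rw [one_mul, Real.norm_of_nonneg (by positivity), Real.norm_of_nonneg (by positivity)]
    exact Real.rpow_le_rpow_of_exponent_le hx h

theorem Filter.EventuallyEq.deriv_atTop_of_hasDerivAt {F : Type*} [NormedAddCommGroup F]
    [NormedSpace ℝ F] {f g f' : ℝ → F} (hfg : f =ᶠ[atTop] g)
    (hg : ∀ᶠ x in atTop, HasDerivAt g (f' x) x) : deriv f =ᶠ[atTop] f' := by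
  obtain ⟨R, hR⟩ := eventually_atTop.1 hfg
  filter_upwards [hg, eventually_gt_atTop R] with x hgx hx
  exact (hgx.congr_of_eventuallyEq
    (eventually_of_mem (Ioi_mem_nhds hx) fun y hy => hR y hy.le)).deriv

theorem hasDerivAt_sum_mul_rpow (A : Finset ℝ) (c : ℝ → ℂ) {x : ℝ} (hx : 0 < x) :
    HasDerivAt (fun y : ℝ => ∑ a ∈ A, c a * ((y ^ a : ℝ) : ℂ))
      (∑ a ∈ A, c a * a * ((x ^ (a - 1) : ℝ) : ℂ)) x := by
  refine HasDerivAt.fun_sum fun a _ => ?_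
  have h := ((Real.hasDerivAt_rpow_const (p := a) (Or.inl hx.ne')).ofReal_comp).const_mul (c a)
  exact h.congr_deriv (by push_cast; ring)

theorem HasDerivAt.mul_rpow_mul_inv_pow {P : ℝ → ℂ} {P' : ℂ} {x : ℝ} (hP : HasDerivAt P P' x)
    (hPx : P x ≠ 0) (hx : 0 < x) (d : ℂ) (e : ℝ) (n : ℕ) :
    HasDerivAt (fun y => d * ((y ^ e : ℝ) : ℂ) * (P y)⁻¹ ^ n)
      (d * e * ((x ^ (e - 1) : ℝ) : ℂ) * (P x)⁻¹ ^ n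
        - d * n * ((x ^ e : ℝ) : ℂ) * P' * (P x)⁻¹ ^ (n + 1)) x := by
  have hxe := ((Real.hasDerivAt_rpow_const (p := e) (Or.inl hx.ne')).ofReal_comp).const_mul d
  refine (hxe.fun_mul ((hP.fun_inv hPx).fun_pow n)).congr_deriv ?_
  rcases n with _ | n
  · push_cast
    ring
  · rw [div_eq_mul_inv, ← inv_pow]
    push_cast
    ring

theorem tendsto_sum_mul_rpow_sub_max' (A : Finset ℝ) (hA : A.Nonempty) (c : ℝ → ℂ) :
    Tendsto (fun x : ℝ => ∑ a ∈ A, c a * ((x ^ (a - A.max' hA) : ℝ) : ℂ)) atTop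
      (𝓝 (c (A.max' hA))) := by
  have hterm : ∀ a ∈ A, Tendsto (fun x : ℝ => c a * ((x ^ (a - A.max' hA) : ℝ) : ℂ)) atTop
      (𝓝 (if a = A.max' hA then c a else 0)) := by
    intro a ha
    split_ifs with h
    · simp [h]
    · have hlt : 0 < A.max' hA - a := sub_pos.2 (lt_of_le_of_ne (le_max' A a ha) h)
      have := (Complex.continuous_ofReal.tendsto 0).comp (tendsto_rpow_neg_atTop hlt)
      simpa using this.const_mul (c a)
  simpa [sum_ite_eq', max'_mem] using tendsto_finsetSum A hterm

theorem sum_mul_rpow_eq_rpow_mul_sum (A : Finset ℝ) (c : ℝ → ℂ) (ν : ℝ) {x : ℝ} (hx : 0 < x) :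
    ∑ a ∈ A, c a * ((x ^ a : ℝ) : ℂ)
      = ((x ^ ν : ℝ) : ℂ) * ∑ a ∈ A, c a * ((x ^ (a - ν) : ℝ) : ℂ) := by
  rw [mul_sum]
  refine sum_congr rfl fun a _ => ?_
  rw [mul_left_comm, ← Complex.ofReal_mul, ← Real.rpow_add hx, add_sub_cancel]

section RpowMul

variable {P g : ℝ → ℂ} {ν : ℝ} {L : ℂ}

theorem eventually_ne_zero_of_eq_rpow_mul (hg : Tendsto g atTop (𝓝 L)) (hL : L ≠ 0)
    (hP : ∀ᶠ x in atTop, P x = ((x ^ ν : ℝ) : ℂ) * g x) : ∀ᶠ x in atTop, P x ≠ 0 := by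
  filter_upwards [hP, hg.eventually_ne hL, eventually_gt_atTop 0] with x hPx hgx hx
  rw [hPx]
  exact mul_ne_zero (Complex.ofReal_ne_zero.2 (Real.rpow_pos_of_pos hx ν).ne') hgx

theorem isBigO_inv_rpow_neg_of_eq_rpow_mul (hg : Tendsto g atTop (𝓝 L)) (hL : L ≠ 0)
    (hP : ∀ᶠ x in atTop, P x = ((x ^ ν : ℝ) : ℂ) * g x) :
    (fun x => (P x)⁻¹) =O[atTop] fun x => x ^ (-ν) := by
  have hinv : (fun x => (P x)⁻¹) =ᶠ[atTop] fun x => ((x ^ (-ν) : ℝ) : ℂ) * (g x)⁻¹ := by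
    filter_upwards [hP, eventually_gt_atTop 0] with x hPx hx
    rw [hPx, mul_inv, Real.rpow_neg hx.le, Complex.ofReal_inv]
  have hrpow : (fun x : ℝ => ((x ^ (-ν) : ℝ) : ℂ)) =O[atTop] fun x => x ^ (-ν) :=
    isBigO_of_le _ fun x => (Complex.norm_real _).le
  simpa using (hrpow.mul ((hg.inv₀ hL).isBigO_one ℝ)).congr' hinv.symm EventuallyEq.rfl

end RpowMul

inductive IsSymbolOfOrder (P : ℝ → ℂ) (ν μ : ℝ) : (ℝ → ℂ) → Prop
  | monomial (d : ℂ) (e : ℝ) (n : ℕ) (he : e - n * ν ≤ μ) :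
      IsSymbolOfOrder P ν μ fun x => d * ((x ^ e : ℝ) : ℂ) * (P x)⁻¹ ^ n
  | add {f g : ℝ → ℂ} : IsSymbolOfOrder P ν μ f → IsSymbolOfOrder P ν μ g →
      IsSymbolOfOrder P ν μ fun x => f x + g x

namespace IsSymbolOfOrder

variable {P : ℝ → ℂ} {ν μ : ℝ}

theorem zero : IsSymbolOfOrder P ν μ fun _ => 0 := by
  simpa using monomial (P := P) (ν := ν) (μ := μ) 0 μ 0 (by simp)

theorem sum {ι : Type*} (s : Finset ι) {f : ι → ℝ → ℂ} (hf : ∀ i ∈ s, IsSymbolOfOrder P ν μ (f i)) :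
    IsSymbolOfOrder P ν μ fun x => ∑ i ∈ s, f i x := by
  classical
  induction s using Finset.induction_on with
  | empty => simpa using zero
  | insert i s hi ih =>
    simp only [sum_insert hi]
    exact (hf i (mem_insert_self i s)).add (ih fun j hj => hf j (mem_insert_of_mem hj))

theorem isBigO (hQ : (fun x => (P x)⁻¹) =O[atTop] fun x => x ^ (-ν)) {f : ℝ → ℂ}
    (hf : IsSymbolOfOrder P ν μ f) : f =O[atTop] fun x => x ^ μ := by
  induction hf with
  | add _ _ ihf ihg => exact ihf.add ihg
  | monomial d e n he =>
    have hrpow : (fun x => d * ((x ^ e : ℝ) : ℂ)) =O[atTop] fun x => x ^ e :=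
      (isBigO_of_le _ fun x => (Complex.norm_real _).le).const_mul_left d
    have hexp : (fun x : ℝ => x ^ e * (x ^ (-ν)) ^ n) =ᶠ[atTop] fun x => x ^ (e - n * ν) := by
      filter_upwards [eventually_gt_atTop 0] with x hx
      rw [← Real.rpow_mul_natCast hx.le, ← Real.rpow_add hx]
      ring_nf
    exact (hrpow.mul (hQ.pow n)).trans
      ((isBigO_rpow_rpow_atTop_of_le he).congr' hexp.symm EventuallyEq.rfl)

theorem exists_hasDerivAt {A : Finset ℝ} {c : ℝ → ℂ}
    (hP : ∀ x, 0 < x → P x = ∑ a ∈ A, c a * ((x ^ a : ℝ) : ℂ)) (hν : ∀ a ∈ A, a ≤ ν)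
    (hP0 : ∀ᶠ x in atTop, P x ≠ 0) {f : ℝ → ℂ} (hf : IsSymbolOfOrder P ν μ f) :
    ∃ g, IsSymbolOfOrder P ν (μ - 1) g ∧ ∀ᶠ x in atTop, HasDerivAt f (g x) x := by
  induction hf with
  | add _ _ ihf ihg =>
    obtain ⟨f', hf', hderivf⟩ := ihf
    obtain ⟨g', hg', hderivg⟩ := ihg
    exact ⟨_, hf'.add hg', hderivf.and hderivg |>.mono fun x h => h.1.add h.2⟩
  | monomial d e n he =>
    refine ⟨fun x => d * e * ((x ^ (e - 1) : ℝ) : ℂ) * (P x)⁻¹ ^ n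
        + ∑ a ∈ A, -(d * n * c a * a) * ((x ^ (e + (a - 1)) : ℝ) : ℂ) * (P x)⁻¹ ^ (n + 1),
      (monomial _ _ _ (by linarith)).add (sum A fun a ha => monomial _ _ _ ?_), ?_⟩
    · have := hν a ha
      push_cast
      linarith
    filter_upwards [hP0, eventually_gt_atTop 0] with x hPx hx
    have hP' : HasDerivAt P (∑ a ∈ A, c a * a * ((x ^ (a - 1) : ℝ) : ℂ)) x :=
      (hasDerivAt_sum_mul_rpow A c hx).congr_of_eventuallyEq
        (eventually_of_mem (Ioi_mem_nhds hx) hP)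
    refine (hP'.mul_rpow_mul_inv_pow hPx hx d e n).congr_deriv ?_
    rw [sub_eq_add_neg, mul_sum, sum_mul, ← sum_neg_distrib]
    congr 1
    refine sum_congr rfl fun a _ => ?_
    rw [Real.rpow_add hx, Complex.ofReal_mul]
    ring

end IsSymbolOfOrder

theorem exists_isSymbolOfOrder_iteratedDeriv_inv {P : ℝ → ℂ} {A : Finset ℝ} {c : ℝ → ℂ} {ν : ℝ}
    (hP : ∀ x, 0 < x → P x = ∑ a ∈ A, c a * ((x ^ a : ℝ) : ℂ)) (hν : ∀ a ∈ A, a ≤ ν)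
    (hP0 : ∀ᶠ x in atTop, P x ≠ 0) (k : ℕ) :
    ∃ f, IsSymbolOfOrder P ν (-ν - k) f ∧ iteratedDeriv k (fun x => (P x)⁻¹) =ᶠ[atTop] f := by
  induction k with
  | zero =>
    refine ⟨_, .monomial 1 0 1 (by simp), .of_forall fun x => ?_⟩
    simp
  | succ k ih =>
    obtain ⟨f, hf, hkf⟩ := ih
    obtain ⟨g, hg, hderiv⟩ := hf.exists_hasDerivAt hP hν hP0
    refine ⟨g, by convert hg using 1; push_cast; ring, ?_⟩
    rw [iteratedDeriv_succ]
    exact hkf.deriv_atTop_of_hasDerivAt hderiv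

theorem reciprocal_symbol_derivative_decay_general (A : Finset ℝ) (hA : A.Nonempty)
    (c : ℝ → ℂ) (hc : c (A.max' hA) ≠ 0)
    (P : ℝ → ℂ)
    (hP : ∀ x : ℝ, 0 < x → P x = ∑ a ∈ A, c a * ((x ^ a : ℝ) : ℂ)) :
    ∀ k : ℕ, ∃ C : ℝ, 0 < C ∧ ∃ R : ℝ, 0 < R ∧
      ∀ x : ℝ, R < x →
        P x ≠ 0 ∧
          ‖iteratedDeriv k (fun y : ℝ => (P y)⁻¹) x‖ ≤
            C * x ^ (-(A.max' hA) - (k : ℝ)) := by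
  intro k
  have hfactor : ∀ᶠ x in atTop, P x = ((x ^ A.max' hA : ℝ) : ℂ)
      * ∑ a ∈ A, c a * ((x ^ (a - A.max' hA) : ℝ) : ℂ) :=
    (eventually_gt_atTop 0).mono fun x hx =>
      (hP x hx).trans (sum_mul_rpow_eq_rpow_mul_sum A c _ hx)
  have hlim := tendsto_sum_mul_rpow_sub_max' A hA c
  have hP0 := eventually_ne_zero_of_eq_rpow_mul hlim hc hfactor
  obtain ⟨f, hf, hkf⟩ :=
    exists_isSymbolOfOrder_iteratedDeriv_inv (ν := A.max' hA) hP (fun a ha => le_max' A a ha) hP0 k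
  have hQ := isBigO_inv_rpow_neg_of_eq_rpow_mul hlim hc hfactor
  obtain ⟨C, hC, hbound⟩ := (hf.isBigO hQ).exists_pos
  obtain ⟨R, hR⟩ := eventually_atTop.1 (hP0.and (hkf.and hbound.bound))
  refine ⟨C, hC, max R 1, by positivity, fun x hx => ?_⟩
  obtain ⟨hPx, hkfx, hfx⟩ := hR x (le_of_max_le_left hx.le)
  rw [Real.norm_of_nonneg (Real.rpow_nonneg (by linarith [le_max_right R 1]) _)] at hfx
  exact ⟨hPx, hkfx ▸ hfx⟩

/-- Derivative decay estimate for the reciprocal of a one-dimensional elliptic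
fractional symbol: for every `k` there are `C, R > 0` such that for `λ > R`,
`P(λ) ≠ 0` and `|(d/dλ)^k (1/P)(λ)| ≤ C λ^{-ν-k}` where `ν = max A`. -/
theorem reciprocal_symbol_derivative_decay (A : Finset ℝ) (hA : A.Nonempty)
    (hnonneg : ∀ a ∈ A, 0 ≤ a) (c : ℝ → ℂ) (hc : c (A.max' hA) ≠ 0)
    (P : ℝ → ℂ)
    (hP : ∀ x : ℝ, 0 < x → P x = ∑ a ∈ A, c a * ((x ^ a : ℝ) : ℂ)) :
    ∀ k : ℕ, ∃ C : ℝ, 0 < C ∧ ∃ R : ℝ, 0 < R ∧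
      ∀ x : ℝ, R < x →
        P x ≠ 0 ∧
          ‖iteratedDeriv k (fun y : ℝ => (P y)⁻¹) x‖ ≤
            C * x ^ (-(A.max' hA) - (k : ℝ)) :=
  reciprocal_symbol_derivative_decay_general A hA c hc P hP
end

section
/- Let n ≥ 1 and let α ∈ ℝ with 0 < α < 1. Then for every λ ∈ ℝ^n with λ ≠ 0, the sum Σ_{i=1}^n (−i·λ_i)^α has strictly positive real part, and in particular Σ_{i=1}^n (−i·λ_i)^α ≠ 0; here (−i·λ_i)^α denotes the principal complex power Complex.cpow of −i times the complex coercion of λ_i (so each nonzero summand lies in the open right half-plane, having argument ±πα/2). Consequently the symbol of the fractional Laplace-type operator Σ_{i=1}^n ∂_i^α is nonvanishing on ℝ^n \ {0}, i.e. the operator is elliptic. -/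
open Finset Complex

/-
Each summand `(-i λ_j)^α` has modulus `|λ_j|^α` and argument `±πα/2` (or vanishes), so it lies in
the closed right half-plane, and in the open one when `λ_j ≠ 0`. Since `λ ≠ 0` some summand is of
the second kind, so the real part of the sum is positive.
-/

namespace Complex

variable {z : ℂ} {α : ℝ}

lemma abs_arg_mul_lt_pi_div_two (hz : 0 ≤ z.re) (hα : |α| < 1) : |arg z * α| < Real.pi / 2 :=
  calc |arg z * α| = |arg z| * |α| := abs_mul _ _
    _ ≤ Real.pi / 2 * |α| := by gcongr; exact abs_arg_le_pi_div_two_iff.2 hz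
    _ < Real.pi / 2 := mul_lt_of_lt_one_right (by positivity) hα

lemma re_cpow_ofReal_nonneg (hz : 0 ≤ z.re) (hα : |α| < 1) : 0 ≤ (z ^ (α : ℂ)).re := by
  rw [cpow_ofReal_re]
  exact mul_nonneg (Real.rpow_nonneg (norm_nonneg z) α)
    (Real.cos_nonneg_of_mem_Icc (abs_le.1 (abs_arg_mul_lt_pi_div_two hz hα).le))

lemma re_cpow_ofReal_pos (hz₀ : z ≠ 0) (hz : 0 ≤ z.re) (hα : |α| < 1) :
    0 < (z ^ (α : ℂ)).re := by
  rw [cpow_ofReal_re]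
  exact mul_pos (Real.rpow_pos_of_pos (norm_pos_iff.2 hz₀) α)
    (Real.cos_pos_of_mem_Ioo (abs_lt.1 (abs_arg_mul_lt_pi_div_two hz hα)))

lemma re_sum_cpow_ofReal_pos {ι : Type*} [Fintype ι] {w : ι → ℂ} (hw : ∀ i, 0 ≤ (w i).re)
    (hw₀ : w ≠ 0) (hα : |α| < 1) : 0 < (∑ i, w i ^ (α : ℂ)).re := by
  obtain ⟨j, hj⟩ := Function.ne_iff.1 hw₀
  rw [re_sum]
  exact sum_pos' (fun i _ => re_cpow_ofReal_nonneg (hw i) hα)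
    ⟨j, mem_univ j, re_cpow_ofReal_pos hj (hw j) hα⟩

end Complex

theorem fractional_laplacian_elliptic_general (n : ℕ) (α : ℝ)
    (h0 : 0 < α) (h1 : α < 1) :
    ∀ ξ : EuclideanSpace ℝ (Fin n), ξ ≠ 0 →
      0 < (∑ i, (-Complex.I * (ξ i : ℂ)) ^ (α : ℂ)).re ∧
        (∑ i, (-Complex.I * (ξ i : ℂ)) ^ (α : ℂ)) ≠ 0 := by
  intro ξ hξ
  have hsymbol_ne : (fun i => -Complex.I * (ξ i : ℂ)) ≠ 0 := fun h =>
    hξ (by ext i; simpa using congr_fun h i)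
  have hre : 0 < (∑ i, (-Complex.I * (ξ i : ℂ)) ^ (α : ℂ)).re :=
    re_sum_cpow_ofReal_pos (fun i => by simp) hsymbol_ne (abs_lt.2 ⟨by linarith, h1⟩)
  exact ⟨hre, fun h => hre.ne' (by rw [h, zero_re])⟩

/-- The symbol `Σ_{i=1}^n (-iλ_i)^α` of the fractional Laplace-type operator
`Σ_i ∂_i^α` with `0 < α < 1` has strictly positive real part — and in particular
is nonzero — at every nonzero real frequency; i.e. the operator is elliptic. -/
theorem fractional_laplacian_elliptic (n : ℕ) (hn : 1 ≤ n) (α : ℝ)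
    (h0 : 0 < α) (h1 : α < 1) :
    ∀ ξ : EuclideanSpace ℝ (Fin n), ξ ≠ 0 →
      0 < (∑ i, (-Complex.I * (ξ i : ℂ)) ^ (α : ℂ)).re ∧
        (∑ i, (-Complex.I * (ξ i : ℂ)) ^ (α : ℂ)) ≠ 0 :=
  fractional_laplacian_elliptic_general n α h0 h1
end
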